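/- arXiv:2109.10981 — 7 statements merged into one kernel-verified Lean document; each statement's English description precedes it below -/
import Mathlib

section
/- Every Hamel basis of ℝ over ℚ has inner Lebesgue measure zero; in particular, every Lebesgue-measurable Hamel basis has Lebesgue measure zero. -/
open MeasureTheory Filter Set
open scoped ENNReal Pointwise Cardinal
open scoped Topology

/-- A Hamel basis: a basis of ℝ as a vector space over ℚ, viewed as a subset of ℝ. -/
def IsHamelBasis (B : Set ℝ) : Prop :=
  LinearIndependent ℚ ((↑) : B → ℝ) ∧ Submodule.span ℚ B = ⊤

lemma hamel_key (B : Set ℝ) (hB : IsHamelBasis B) (K : Set ℝ) (hKB : K ⊆ B)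
    (hK : MeasurableSet K) : volume K = 0 := by
  by_contra h
  have hpos : 0 < volume K := pos_iff_ne_zero.mpr h
  have hnhds : K - K ∈ 𝓝 (0 : ℝ) :=
    MeasureTheory.Measure.sub_mem_nhds_zero_of_addHaar_pos volume K hK hpos
  -- B is nonempty
  obtain ⟨b, hb⟩ : B.Nonempty := by
    by_contra hne
    rw [not_nonempty_iff_eq_empty] at hne
    have := hB.2
    rw [hne] at this
    simp [Submodule.span_empty] at this
  have hb0 : b ≠ 0 := by
    intro h0
    exact hB.1.ne_zero ⟨b, hb⟩ (by simpa using h0)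
  obtain ⟨ε, hε, hball⟩ := Metric.mem_nhds_iff.mp hnhds
  obtain ⟨q, hq0, hq⟩ : ∃ q : ℚ, 0 < q ∧ (q : ℝ) < ε / |b| := by
    obtain ⟨q, hq1, hq2⟩ := exists_rat_btwn (show (0:ℝ) < ε / |b| from
      div_pos hε (abs_pos.mpr hb0))
    exact ⟨q, by exact_mod_cast hq1, hq2⟩
  have hmem : (q : ℝ) * b ∈ K - K := by
    apply hball
    simp only [Metric.mem_ball, dist_zero_right, norm_mul]
    calc ‖(q:ℝ)‖ * ‖b‖ = (q:ℝ) * |b| := by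
          rw [Real.norm_eq_abs, Real.norm_eq_abs, abs_of_pos (by exact_mod_cast hq0)]
      _ < (ε / |b|) * |b| := by
          exact mul_lt_mul_of_pos_right hq (abs_pos.mpr hb0)
      _ = ε := div_mul_cancel₀ ε (abs_ne_zero.mpr hb0)
  obtain ⟨k₁, hk₁, k₂, hk₂, heq⟩ := mem_sub.mp hmem
  have hk₁B : k₁ ∈ B := hKB hk₁
  have hk₂B : k₂ ∈ B := hKB hk₂
  have hq0' : (q : ℝ) ≠ 0 := by exact_mod_cast hq0.ne'
  have hk12 : k₁ ≠ k₂ := by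
    intro hk
    apply mul_ne_zero hq0' hb0
    rw [← heq, hk, sub_self]
  have hLI := linearIndepOn_iff.mp (linearIndependent_subtype_iff.mp hB.1)
  -- qb - k₁ + k₂ = 0
  have hcomb : (q : ℝ) * b - k₁ + k₂ = 0 := by rw [← heq]; ring
  by_cases hbk₁ : b = k₁
  · -- l = single k₁ (q-1) + single k₂ 1
    set l : ℝ →₀ ℚ := Finsupp.single k₁ (q - 1) + Finsupp.single k₂ 1 with hl
    have hl0 : l = 0 := by
      apply hLI
      · rw [Finsupp.mem_supported]
        intro x hx
        simp only [Finset.mem_coe, Finsupp.mem_support_iff, hl] at hx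
        by_contra hxB
        apply hx
        have h2 : k₁ ≠ x := fun h => hxB (h ▸ hk₁B)
        have h3 : k₂ ≠ x := fun h => hxB (h ▸ hk₂B)
        simp [Finsupp.single_apply, h2, h3]
      · simp only [hl, map_add, Finsupp.linearCombination_single, id_eq, smul_eq_mul,
          Rat.smul_def]
        push_cast
        rw [← hbk₁]
        linarith [hcomb]
    have : l k₂ = 1 := by
      simp [hl, Finsupp.single_apply, hk12, (Ne.symm hk12)]
    rw [hl0] at this
    simp at this
  · by_cases hbk₂ : b = k₂
    · set l : ℝ →₀ ℚ := Finsupp.single k₁ (-1) + Finsupp.single k₂ (q + 1) with hl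
      have hl0 : l = 0 := by
        apply hLI
        · rw [Finsupp.mem_supported]
          intro x hx
          simp only [Finset.mem_coe, Finsupp.mem_support_iff, hl] at hx
          by_contra hxB
          apply hx
          have h2 : k₁ ≠ x := fun h => hxB (h ▸ hk₁B)
          have h3 : k₂ ≠ x := fun h => hxB (h ▸ hk₂B)
          simp [Finsupp.single_apply, h2, h3]
        · simp only [hl, map_add, Finsupp.linearCombination_single, id_eq, smul_eq_mul,
            Rat.smul_def]
          push_cast
          rw [← hbk₂] at hcomb ⊢
          linarith [hcomb]
      have : l k₁ = -1 := by
        simp [hl, Finsupp.single_apply, hk12, (Ne.symm hk12)]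
      rw [hl0] at this
      simp at this
    · set l : ℝ →₀ ℚ := Finsupp.single b q + (Finsupp.single k₂ 1 - Finsupp.single k₁ 1)
        with hl
      have hl0 : l = 0 := by
        apply hLI
        · rw [Finsupp.mem_supported]
          intro x hx
          simp only [Finset.mem_coe, Finsupp.mem_support_iff, hl] at hx
          by_contra hxB
          apply hx
          simp only [Finsupp.add_apply, Finsupp.sub_apply, Finsupp.single_apply]
          have h1 : b ≠ x := fun h => hxB (h ▸ hb)
          have h2 : k₁ ≠ x := fun h => hxB (h ▸ hk₁B)
          have h3 : k₂ ≠ x := fun h => hxB (h ▸ hk₂B)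
          simp [h1, h2, h3]
        · simp only [hl, map_add, map_sub, Finsupp.linearCombination_single, id_eq,
            smul_eq_mul, Rat.smul_def]
          push_cast
          linarith [hcomb]
      have : l b = q := by
        simp [hl, Finsupp.single_apply, Ne.symm hbk₁, Ne.symm hbk₂, hbk₁, hbk₂]
      rw [hl0] at this
      simp at this
      exact hq0.ne' this.symm

theorem hamel_basis_inner_measure_zero (B : Set ℝ) (hB : IsHamelBasis B) :
    (∀ K : Set ℝ, K ⊆ B → MeasurableSet K → volume K = 0) ∧
      (MeasurableSet B → volume B = 0) := by
  refine ⟨fun K hKB hK => hamel_key B hB K hKB hK,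
    fun hBm => hamel_key B hB B subset_rfl hBm⟩
end

section
/- The Cantor middle-thirds set contains a Hamel basis of ℝ over ℚ. -/
open MeasureTheory Filter Set
open scoped ENNReal Pointwise Cardinal

/-- Left endpoint of the basic interval of the ratio-`r` Cantor construction indexed by a
binary string `w` (each bit selects the left or right subinterval of relative length `r`). -/
def leftEnd (r : ℝ) : List Bool → ℝ
  | [] => 0
  | b :: w => (if b then 1 - r else 0) + r * leftEnd r w

/-- Stage `k` of the ratio-`r` Cantor construction: the union of the `2^k` closed
intervals of length `r^k` indexed by binary strings of length `k`. -/
def cantorStage (r : ℝ) (k : ℕ) : Set ℝ :=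
  ⋃ w ∈ {w : List Bool | w.length = k}, Set.Icc (leftEnd r w) (leftEnd r w + r ^ k)

/-- The Cantor-like set `C_r` with ratio `r` (for `r = 1/3` this is the middle-thirds set). -/
def cantorLikeSet (r : ℝ) : Set ℝ := ⋂ k, cantorStage r k

/-- The term of index `n` in the ternary expansion with digits in `{0,2}` given by `f`. -/
noncomputable def ctTerm (f : ℕ → Bool) (n : ℕ) : ℝ := (if f n then 2 else 0) / 3 ^ (n + 1)

noncomputable def pointOf (f : ℕ → Bool) : ℝ := ∑' n, ctTerm f n

lemma ctTerm_nonneg (f : ℕ → Bool) (n : ℕ) : 0 ≤ ctTerm f n := by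
  unfold ctTerm; positivity

lemma ctTerm_le (f : ℕ → Bool) (n : ℕ) : ctTerm f n ≤ 2 / 3 ^ (n + 1) := by
  unfold ctTerm
  gcongr
  split <;> norm_num

lemma summable_geom_aux : Summable (fun n : ℕ => (2 : ℝ) / 3 ^ (n + 1)) := by
  have : (fun n : ℕ => (2 : ℝ) / 3 ^ (n + 1)) = fun n : ℕ => (2 / 3) * (1 / 3 : ℝ) ^ n := by
    funext n; rw [pow_succ, one_div, inv_pow]; ring
  rw [this]
  exact (summable_geometric_of_lt_one (by norm_num) (by norm_num)).mul_left _

lemma tsum_geom_aux : ∑' n : ℕ, (2 : ℝ) / 3 ^ (n + 1) = 1 := by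
  have : (fun n : ℕ => (2 : ℝ) / 3 ^ (n + 1)) = fun n : ℕ => (2 / 3) * (1 / 3 : ℝ) ^ n := by
    funext n; rw [pow_succ, one_div, inv_pow]; ring
  rw [this, tsum_mul_left, tsum_geometric_of_lt_one (by norm_num) (by norm_num)]
  norm_num

lemma summable_ctTerm (f : ℕ → Bool) : Summable (ctTerm f) :=
  Summable.of_nonneg_of_le (ctTerm_nonneg f) (ctTerm_le f) summable_geom_aux

lemma leftEnd_ofFn (f : ℕ → Bool) (k : ℕ) :
    leftEnd (1 / 3) (List.ofFn fun i : Fin k => f i) = ∑ n ∈ Finset.range k, ctTerm f n := by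
  induction k generalizing f with
  | zero => simp [leftEnd]
  | succ k ih =>
      rw [List.ofFn_succ, leftEnd, Finset.sum_range_succ' _ k]
      have := ih (fun n => f (n + 1))
      simp only [Fin.val_succ] at this ⊢
      rw [this, Finset.mul_sum]
      have h0 : ctTerm f 0 = if f 0 then 1 - 1/3 else 0 := by
        unfold ctTerm; split <;> norm_num
      have hs : ∀ n, (1/3 : ℝ) * ctTerm (fun n => f (n + 1)) n = ctTerm f (n + 1) := by
        intro n
        unfold ctTerm
        rw [pow_succ]
        ring
      simp only [hs, h0]
      norm_num
      split <;> simp [add_comm]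

lemma pointOf_mem (f : ℕ → Bool) : pointOf f ∈ cantorLikeSet (1 / 3) := by
  rw [cantorLikeSet]
  refine mem_iInter.2 fun k => ?_
  refine mem_iUnion₂.2 ⟨List.ofFn fun i : Fin k => f i, by simp, ?_⟩
  rw [leftEnd_ofFn]
  have hsum := summable_ctTerm f
  have hsplit : pointOf f = ∑ n ∈ Finset.range k, ctTerm f n + ∑' n, ctTerm f (n + k) :=
    (Summable.sum_add_tsum_nat_add k hsum).symm
  have htail_nonneg : 0 ≤ ∑' n, ctTerm f (n + k) :=
    tsum_nonneg fun n => ctTerm_nonneg f _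
  have htail_le : ∑' n, ctTerm f (n + k) ≤ (1 / 3 : ℝ) ^ k := by
    have h1 : ∑' n, ctTerm f (n + k) ≤ ∑' n : ℕ, (1 / 3 : ℝ) ^ k * (2 / 3 ^ (n + 1)) := by
      refine Summable.tsum_le_tsum (fun n => ?_) ((summable_nat_add_iff k).2 hsum)
        (summable_geom_aux.mul_left _)
      calc ctTerm f (n + k) ≤ 2 / 3 ^ (n + k + 1) := ctTerm_le f _
        _ = (1 / 3 : ℝ) ^ k * (2 / 3 ^ (n + 1)) := by
            rw [show n + k + 1 = (n + 1) + k by ring, pow_add 3 (n+1) k, div_pow]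
            ring
    rw [tsum_mul_left, tsum_geom_aux, mul_one] at h1
    exact h1
  constructor
  · rw [hsplit]; linarith
  · rw [hsplit]; linarith

lemma two_mul_eq_pointOf_add (t : ℝ) (ht : t ∈ Ico (0:ℝ) 1) :
    ∃ f g : ℕ → Bool, 2 * t = pointOf f + pointOf g := by
  obtain ⟨ht0, ht1⟩ := ht
  set d : ℕ → ℤ := fun n => ⌊3 ^ (n + 1) * t⌋ - 3 * ⌊3 ^ n * t⌋ with hd
  have hpow : ∀ n : ℕ, (0:ℝ) < 3 ^ n := fun n => by positivity
  have hd0 : ∀ n, 0 ≤ d n := by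
    intro n
    have : ((3 * ⌊3 ^ n * t⌋ : ℤ) : ℝ) ≤ 3 ^ (n + 1) * t := by
      push_cast
      rw [pow_succ, mul_comm ((3:ℝ)^n) 3, mul_assoc]
      have := Int.floor_le (3 ^ n * t)
      linarith
    have h := Int.le_floor.2 this
    show (0:ℤ) ≤ ⌊3 ^ (n + 1) * t⌋ - 3 * ⌊3 ^ n * t⌋
    omega
  have hd2 : ∀ n, d n ≤ 2 := by
    intro n
    have : (3:ℝ) ^ (n + 1) * t < ((3 * ⌊3 ^ n * t⌋ + 3 : ℤ) : ℝ) := by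
      push_cast
      rw [pow_succ, mul_comm ((3:ℝ)^n) 3, mul_assoc]
      have := Int.lt_floor_add_one (3 ^ n * t)
      linarith
    have h := Int.floor_lt.2 this
    show ⌊3 ^ (n + 1) * t⌋ - 3 * ⌊3 ^ n * t⌋ ≤ 2
    omega
  have hpartial : ∀ N, ∑ n ∈ Finset.range N, ((d n : ℝ) / 3 ^ (n + 1))
      = ⌊3 ^ N * t⌋ / 3 ^ N := by
    intro N
    induction N with
    | zero =>
        simp [Int.floor_eq_zero_iff.2 ⟨by simpa using ht0, by simpa using ht1⟩]
    | succ N ih =>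
        rw [Finset.sum_range_succ, ih, hd]
        have h1 : (3:ℝ) ^ N ≠ 0 := (hpow N).ne'
        have h2 : (3:ℝ) ^ (N + 1) ≠ 0 := (hpow (N+1)).ne'
        push_cast
        field_simp
        ring
  have hhas : HasSum (fun n => (d n : ℝ) / 3 ^ (n + 1)) t := by
    rw [hasSum_iff_tendsto_nat_of_nonneg (fun n => by
      have := hd0 n; positivity)]
    have heq : (fun N => ∑ n ∈ Finset.range N, ((d n : ℝ) / 3 ^ (n + 1)))
        = fun N => (⌊3 ^ N * t⌋ : ℝ) / 3 ^ N := funext hpartial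
    rw [heq]
    refine tendsto_of_tendsto_of_tendsto_of_le_of_le
      (g := fun N : ℕ => t - (1/3 : ℝ) ^ N) (h := fun _ => t) ?_ tendsto_const_nhds ?_ ?_
    · have h1 : Tendsto (fun N : ℕ => t - (1/3 : ℝ) ^ N) atTop (nhds (t - 0)) :=
        Tendsto.sub tendsto_const_nhds
          (tendsto_pow_atTop_nhds_zero_of_lt_one (by norm_num) (by norm_num))
      simpa using h1
    · intro N
      have h1 := Int.lt_floor_add_one (3 ^ N * t)
      rw [sub_le_iff_le_add, div_add' _ _ _ (hpow N).ne', le_div_iff₀ (hpow N)]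
      have : (1/3:ℝ) ^ N * 3 ^ N = 1 := by
        rw [← mul_pow]; norm_num
      nlinarith [hpow N]
    · intro N
      rw [div_le_iff₀ (hpow N)]
      have := Int.floor_le (3 ^ N * t)
      linarith
  refine ⟨fun n => decide (1 ≤ d n), fun n => decide (d n = 2), ?_⟩
  have hfg : ∀ n, ctTerm (fun n => decide (1 ≤ d n)) n + ctTerm (fun n => decide (d n = 2)) n
      = 2 * ((d n : ℝ) / 3 ^ (n + 1)) := by
    intro n
    have h3 : d n = 0 ∨ d n = 1 ∨ d n = 2 := by
      have := hd0 n; have := hd2 n; omega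
    unfold ctTerm
    rcases h3 with h | h | h <;> simp only [h] <;> norm_num <;> ring
  calc 2 * t = ∑' n, 2 * ((d n : ℝ) / 3 ^ (n + 1)) := (hhas.mul_left 2).tsum_eq.symm
    _ = ∑' n, (ctTerm (fun n => decide (1 ≤ d n)) n + ctTerm (fun n => decide (d n = 2)) n) := by
        exact tsum_congr fun n => (hfg n).symm
    _ = pointOf _ + pointOf _ := Summable.tsum_add (summable_ctTerm _) (summable_ctTerm _)

lemma span_cantor_top : Submodule.span ℚ (cantorLikeSet (1 / 3)) = ⊤ := by
  rw [eq_top_iff]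
  have key : ∀ t : ℝ, t ∈ Ico (0:ℝ) 1 → t ∈ Submodule.span ℚ (cantorLikeSet (1 / 3)) := by
    intro t ht
    obtain ⟨f, g, hfg⟩ := two_mul_eq_pointOf_add t ht
    have hmemf : pointOf f ∈ Submodule.span ℚ (cantorLikeSet (1 / 3)) :=
      Submodule.subset_span (pointOf_mem f)
    have hmemg : pointOf g ∈ Submodule.span ℚ (cantorLikeSet (1 / 3)) :=
      Submodule.subset_span (pointOf_mem g)
    have : t = (1/2 : ℚ) • (pointOf f + pointOf g) := by
      rw [Rat.smul_def, ← hfg]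
      push_cast
      ring
    rw [this]
    exact Submodule.smul_mem _ _ (Submodule.add_mem _ hmemf hmemg)
  have keynn : ∀ t : ℝ, 0 ≤ t → t ∈ Submodule.span ℚ (cantorLikeSet (1 / 3)) := by
    intro t ht
    set n : ℕ := ⌊t⌋₊ + 1 with hn
    have hn0 : (0:ℝ) < n := by positivity
    have h1 : t / n ∈ Ico (0:ℝ) 1 := by
      constructor
      · positivity
      · rw [div_lt_one hn0]
        exact_mod_cast Nat.lt_floor_add_one t
    have hmem := key _ h1
    have : t = (n : ℚ) • (t / n) := by
      rw [Rat.smul_def]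
      push_cast
      field_simp
    rw [this]
    exact Submodule.smul_mem _ _ hmem
  rintro t -
  rcases le_total 0 t with h | h
  · exact keynn t h
  · have := Submodule.neg_mem _ (keynn (-t) (by linarith))
    simpa using this

theorem cantor_contains_hamel_basis :
    ∃ B : Set ℝ, B ⊆ cantorLikeSet (1 / 3) ∧ IsHamelBasis B := by
  obtain ⟨B, hB, hspanB, hli⟩ := exists_linearIndependent ℚ (cantorLikeSet (1 / 3))
  exact ⟨B, hB, hli, by rw [hspanB, span_cantor_top]⟩
end

section
/- No Hamel basis of ℝ over ℚ is an analytic set. -/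
open MeasureTheory Filter Set
open scoped ENNReal Pointwise Cardinal

/-- Dependent-choice style construction of a sequence satisfying a chain of conditions
depending only on initial segments. -/
lemma exists_seq_of_chain (Q : (ℕ → ℕ) → ℕ → Prop)
    (h0 : Q (fun _ => 0) 0)
    (hstep : ∀ k σ, Q σ k → ∃ n, Q (Function.update σ k n) (k + 1))
    (hcompat : ∀ k σ σ', (∀ i < k, σ i = σ' i) → Q σ k → Q σ' k) :
    ∃ σ, ∀ k, Q σ k := by
  let F : ∀ k : ℕ, {σ : ℕ → ℕ // Q σ k} := fun k =>
    Nat.rec ⟨fun _ => 0, h0⟩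
      (fun k p => ⟨Function.update p.1 k (Classical.choose (hstep k p.1 p.2)),
        Classical.choose_spec (hstep k p.1 p.2)⟩) k
  have hagree : ∀ k m, k ≤ m → ∀ i < k, (F m).1 i = (F k).1 i := by
    intro k m
    induction m with
    | zero => intro hkm i hi; omega
    | succ m ih =>
      intro hkm i hi
      rcases Nat.lt_or_ge k (m+1) with h | h
      · have h1 : (F (m+1)).1 i = (F m).1 i := by
          show Function.update (F m).1 m _ i = (F m).1 i
          apply Function.update_of_ne
          omega
        rw [h1, ih (by omega) i hi]
      · have : k = m + 1 := by omega
        subst this; rfl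
  refine ⟨fun i => (F (i+1)).1 i, fun k => hcompat k (F k).1 _ ?_ (F k).2⟩
  intro i hi
  exact hagree (i+1) k (by omega) i (by omega)


open Topology in
lemma tree_lemma (σ : ℕ → ℕ) (V : Set (ℕ → ℕ)) (hV : IsOpen V)
    (hTV : {x : ℕ → ℕ | ∀ i, x i ≤ σ i} ⊆ V) :
    ∃ k, {x : ℕ → ℕ | ∀ i < k, x i ≤ σ i} ⊆ V := by
  by_contra h
  push_neg at h
  have h' : ∀ k, ∃ x : ℕ → ℕ, (∀ i < k, x i ≤ σ i) ∧ x ∉ V := by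
    intro k
    obtain ⟨x, hx1, hx2⟩ := not_subset.1 (h k)
    exact ⟨x, hx1, hx2⟩
  choose x hx hxV using h'
  set y : ℕ → (ℕ → ℕ) := fun k i => if i < k then x k i else 0 with hy
  have hyT : ∀ k, y k ∈ {x : ℕ → ℕ | ∀ i, x i ≤ σ i} := by
    intro k i
    simp only [hy]
    split
    · exact hx k i ‹_›
    · exact Nat.zero_le _
  have hcomp : IsCompact {x : ℕ → ℕ | ∀ i, x i ≤ σ i} := by
    have : {x : ℕ → ℕ | ∀ i, x i ≤ σ i} = Set.pi univ (fun i => Set.Iic (σ i)) := by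
      ext x; simp [Set.mem_pi, Set.mem_Iic, Pi.le_def]
    rw [this]
    exact isCompact_univ_pi (fun i => (Set.finite_Iic (σ i)).isCompact)
  obtain ⟨a, haT, φ, hφ, hconv⟩ := hcomp.tendsto_subseq hyT
  have hconvx : Tendsto (fun j => x (φ j)) atTop (𝓝 a) := by
    rw [tendsto_pi_nhds]
    intro i
    have h1 : Tendsto (fun j => y (φ j) i) atTop (𝓝 (a i)) := by
      have := tendsto_pi_nhds.1 hconv i
      exact this
    have h2 : ∀ᶠ j in atTop, x (φ j) i = y (φ j) i := by
      filter_upwards [eventually_ge_atTop (i+1)] with j hj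
      have : i < φ j := lt_of_lt_of_le (Nat.lt_succ_self i) (le_trans hj (hφ.le_apply))
      simp [hy, this]
    exact h1.congr' (h2.mono fun j hj => hj.symm)
  have : ∀ᶠ j in atTop, x (φ j) ∈ V := hconvx.eventually (hV.eventually_mem (hTV haT))
  obtain ⟨j, hj⟩ := this.exists
  exact hxV (φ j) hj


lemma analytic_exists_compact (A : Set ℝ) (hA : MeasureTheory.AnalyticSet A)
    (h : volume A ≠ 0) : ∃ K, K ⊆ A ∧ IsCompact K ∧ 0 < volume K := by
  rw [MeasureTheory.AnalyticSet] at hA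
  rcases hA with rfl | ⟨f, hf, rfl⟩
  · simp at h
  obtain ⟨N, hN⟩ : ∃ N : ℕ, volume (range f ∩ Icc (-(N:ℝ)) N) ≠ 0 := by
    by_contra hc
    push_neg at hc
    apply h
    have hEq : range f = ⋃ N : ℕ, range f ∩ Icc (-(N:ℝ)) N := by
      ext x
      simp only [mem_iUnion, mem_inter_iff, mem_Icc]
      constructor
      · intro hx
        obtain ⟨N, hNx⟩ := exists_nat_ge |x|
        exact ⟨N, hx, neg_le_of_abs_le hNx, le_of_abs_le hNx⟩
      · rintro ⟨N, hx, -⟩; exact hx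
    rw [hEq]
    exact measure_iUnion_null hc
  set I := Icc (-(N:ℝ)) N with hI
  set c := volume (range f ∩ I) with hc
  have hcfin : c ≠ ∞ :=
    ne_of_lt (lt_of_le_of_lt (measure_mono inter_subset_right) isCompact_Icc.measure_lt_top)
  set Q : (ℕ → ℕ) → ℕ → Prop :=
    fun σ k => c / 2 < volume (f '' {x | ∀ i < k, x i ≤ σ i} ∩ I) with hQdef
  have h0 : Q (fun _ => 0) 0 := by
    have h1 : {x : ℕ → ℕ | ∀ i < 0, x i ≤ 0} = univ := by ext x; simp
    simp only [hQdef, h1, image_univ]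
    exact ENNReal.half_lt_self hN hcfin
  have hstep : ∀ k σ, Q σ k → ∃ n, Q (Function.update σ k n) (k+1) := by
    intro k σ hQ
    have hmono : Monotone (fun n => f '' {x | (∀ i < k, x i ≤ σ i) ∧ x k ≤ n} ∩ I) := by
      intro m n hmn
      exact inter_subset_inter (image_mono (fun x hx => ⟨hx.1, le_trans hx.2 hmn⟩))
        subset_rfl
    have hUnion : (⋃ n, f '' {x | (∀ i < k, x i ≤ σ i) ∧ x k ≤ n} ∩ I)
        = f '' {x | ∀ i < k, x i ≤ σ i} ∩ I := by
      have hsets : (⋃ n, {x : ℕ → ℕ | (∀ i < k, x i ≤ σ i) ∧ x k ≤ n})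
          = {x : ℕ → ℕ | ∀ i < k, x i ≤ σ i} := by
        ext x
        simp only [mem_iUnion, mem_setOf_eq]
        exact ⟨fun ⟨n, h1, _⟩ => h1, fun h1 => ⟨x k, h1, le_rfl⟩⟩
      rw [← iUnion_inter, ← image_iUnion, hsets]
    have hsup := hmono.measure_iUnion (μ := volume)
    rw [hUnion] at hsup
    have hlt : c/2 < ⨆ n, volume (f '' {x | (∀ i < k, x i ≤ σ i) ∧ x k ≤ n} ∩ I) := by
      rw [← hsup]; exact hQ
    obtain ⟨n, hn⟩ := lt_iSup_iff.1 hlt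
    refine ⟨n, ?_⟩
    have hset : {x : ℕ→ℕ | ∀ i < k+1, x i ≤ Function.update σ k n i}
        = {x | (∀ i < k, x i ≤ σ i) ∧ x k ≤ n} := by
      ext x
      simp only [mem_setOf_eq]
      constructor
      · intro hx
        refine ⟨fun i hi => ?_, ?_⟩
        · have := hx i (by omega); rwa [Function.update_of_ne (by omega)] at this
        · have := hx k (by omega); rwa [Function.update_self] at this
      · rintro ⟨h1, h2⟩ i hi
        rcases Nat.lt_or_ge i k with h' | h'
        · rw [Function.update_of_ne (by omega)]; exact h1 i h'
        · have hik : i = k := by omega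
          subst hik; rwa [Function.update_self]
    simpa only [hQdef, hset] using hn
  have hcompat : ∀ k σ σ', (∀ i < k, σ i = σ' i) → Q σ k → Q σ' k := by
    intro k σ σ' hagree hQ
    have : {x : ℕ→ℕ | ∀ i < k, x i ≤ σ i} = {x | ∀ i < k, x i ≤ σ' i} := by
      ext x
      exact ⟨fun hx i hi => hagree i hi ▸ hx i hi, fun hx i hi => (hagree i hi).symm ▸ hx i hi⟩
    simpa only [hQdef, this] using hQ
  obtain ⟨σ, hσ⟩ := exists_seq_of_chain Q h0 hstep hcompat
  set K := f '' {x | ∀ i, x i ≤ σ i} with hK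
  have hbox : IsCompact {x : ℕ → ℕ | ∀ i, x i ≤ σ i} := by
    have heq : {x : ℕ → ℕ | ∀ i, x i ≤ σ i} = Set.pi univ (fun i => Set.Iic (σ i)) := by
      ext x; simp [Set.mem_pi, Set.mem_Iic, Pi.le_def]
    rw [heq]
    exact isCompact_univ_pi (fun i => (Set.finite_Iic (σ i)).isCompact)
  have hKcomp : IsCompact K := hbox.image hf
  have hKA : K ⊆ range f := image_subset_range _ _
  have hKm : c / 2 ≤ volume K := by
    rw [Set.measure_eq_iInf_isOpen]
    refine le_iInf fun U => le_iInf fun hKU => le_iInf fun hU => ?_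
    have hsub : {x : ℕ → ℕ | ∀ i, x i ≤ σ i} ⊆ f ⁻¹' U := fun x hx => hKU ⟨x, hx, rfl⟩
    obtain ⟨k, hk⟩ := tree_lemma σ (f ⁻¹' U) (hU.preimage hf) hsub
    refine le_trans (hσ k).le (measure_mono ?_)
    exact subset_trans inter_subset_left (image_subset_iff.2 hk)
  exact ⟨K, hKA, hKcomp, lt_of_lt_of_le (ENNReal.half_pos hN) hKm⟩


theorem hamel_basis_not_analytic (B : Set ℝ) (hB : IsHamelBasis B) :
    ¬ MeasureTheory.AnalyticSet B := by
  intro hAn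
  obtain ⟨hli, hsp⟩ := hB
  -- B is nonempty
  have hBne : B.Nonempty := by
    rcases Set.eq_empty_or_nonempty B with rfl | h
    · rw [Submodule.span_empty] at hsp
      exact absurd hsp bot_ne_top
    · exact h
  -- the basis
  have hsp' : ⊤ ≤ Submodule.span ℚ (Set.range ((↑) : B → ℝ)) := by
    rw [Subtype.range_coe]; exact hsp.ge
  let b : Module.Basis B ℚ ℝ := Module.Basis.mk hli hsp'
  have hb : ∀ j : B, b j = (j : ℝ) := fun j => by
    simp only [b, Module.Basis.coe_mk]
  -- the countable family of pieces
  let S : (Σ n : ℕ, Fin n → ℚ) → Set ℝ := fun p =>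
    (fun c : Fin p.1 → ℝ => ∑ i, (p.2 i : ℝ) * c i) '' (Set.pi univ fun _ : Fin p.1 => B)
  -- the pieces are analytic
  have hSan : ∀ p, MeasureTheory.AnalyticSet (S p) := by
    intro p
    refine MeasureTheory.AnalyticSet.image_of_continuous ?_ ?_
    · -- the pi power of B is analytic
      rw [MeasureTheory.AnalyticSet] at hAn
      rcases hAn with hBe | ⟨f, hf, hrange⟩
      · exact absurd hBe (Set.nonempty_iff_ne_empty.1 hBne)
      rw [MeasureTheory.analyticSet_iff_exists_polishSpace_range]
      refine ⟨Fin p.1 → (ℕ → ℕ), inferInstance, inferInstance,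
        fun g i => f (g i), ?_, ?_⟩
      · exact continuous_pi fun i => hf.comp (continuous_apply i)
      · ext c
        simp only [Set.mem_range, Set.mem_pi, Set.mem_univ, forall_true_left]
        constructor
        · rintro ⟨g, rfl⟩ i
          rw [← hrange]; exact ⟨g i, rfl⟩
        · intro hc
          have : ∀ i, ∃ y : ℕ → ℕ, f y = c i := by
            intro i
            have := hc i
            rw [← hrange] at this
            exact this
          choose g hg using this
          exact ⟨g, funext hg⟩
    · exact continuous_finset_sum _ fun i _ => continuous_const.mul (continuous_apply i)
  -- the pieces cover ℝ
  have hcover : ∀ x : ℝ, ∃ p, x ∈ S p := by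
    intro x
    set l := b.repr x with hl
    refine ⟨⟨l.support.card, fun i => l (l.support.equivFin.symm i).1⟩, ?_⟩
    refine ⟨fun i => ((l.support.equivFin.symm i).1 : ℝ), fun i _ => (l.support.equivFin.symm i).1.2, ?_⟩
    have hx : x = ∑ j ∈ l.support, l j • (j : ℝ) := by
      conv_lhs => rw [← b.linearCombination_repr x]
      rw [Finsupp.linearCombination_apply, Finsupp.sum]
      exact Finset.sum_congr rfl fun j _ => by rw [hb]
    have key : ∑ i : Fin l.support.card,
        ((l (l.support.equivFin.symm i).1 : ℚ) : ℝ) * ((l.support.equivFin.symm i).1 : ℝ)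
        = ∑ j ∈ l.support, l j • (j : ℝ) := by
      rw [← Finset.sum_coe_sort l.support (fun j => l j • (j : ℝ)),
        ← Equiv.sum_comp l.support.equivFin.symm
          (fun j : {j // j ∈ l.support} => l j.1 • ((j.1 : ℝ)))]
      exact Finset.sum_congr rfl fun i _ => (Rat.smul_def _ _).symm
    rw [hx]
    exact key
  -- some piece has positive outer measure
  have hpos : ∃ p, volume (S p) ≠ 0 := by
    by_contra hc
    push_neg at hc
    have huniv : (univ : Set ℝ) ⊆ ⋃ p, S p := fun x _ => Set.mem_iUnion.2 (hcover x)
    have : volume (univ : Set ℝ) = 0 :=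
      le_antisymm (le_trans (measure_mono huniv) (measure_iUnion_null hc).le) zero_le
    rw [Real.volume_univ] at this
    exact ENNReal.top_ne_zero this
  obtain ⟨p, hp⟩ := hpos
  set n := p.1 with hn
  -- B is infinite
  have hBinf : B.Infinite := by
    by_contra hfin
    rw [Set.not_infinite] at hfin
    have hSfin : (S p).Finite := (Set.Finite.pi fun _ => hfin).image _
    exact hp (hSfin.measure_zero _)
  -- a compact subset of positive measure and the Steinhaus theorem
  obtain ⟨K, hKS, hKcomp, hKpos⟩ := analytic_exists_compact (S p) (hSan p) hp
  have hnhds : S p - S p ∈ nhds (0 : ℝ) := by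
    have hst := MeasureTheory.Measure.sub_mem_nhds_zero_of_addHaar_pos volume K
      hKcomp.isClosed.measurableSet hKpos
    exact mem_of_superset hst (Set.sub_subset_sub hKS hKS)
  -- pick 2n+1 distinct elements of B
  obtain ⟨t, htB, htcard⟩ := hBinf.exists_subset_card_eq (2 * n + 1)
  set s₀ : ℝ := ∑ x ∈ t, x with hs₀
  -- a small positive rational multiple of s₀ lies in S p - S p
  obtain ⟨ε, hε, hball⟩ := Metric.mem_nhds_iff.1 hnhds
  obtain ⟨r, hr0, hr1⟩ := exists_rat_btwn (show (0:ℝ) < ε / (|s₀| + 1) by positivity)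
  have hr0' : (0 : ℚ) < r := by exact_mod_cast hr0
  set z : ℝ := (r : ℝ) * s₀ with hz
  have hzmem : z ∈ S p - S p := by
    apply hball
    rw [Metric.mem_ball, Real.dist_0_eq_abs, hz, abs_mul, abs_of_pos hr0]
    calc (r : ℝ) * |s₀| ≤ (r : ℝ) * (|s₀| + 1) := by
          apply mul_le_mul_of_nonneg_left (by linarith) hr0.le
      _ < ε / (|s₀| + 1) * (|s₀| + 1) := by
          apply mul_lt_mul_of_pos_right hr1 (by positivity)
      _ = ε := by field_simp
  -- the subtype embedding of t
  have htB' : ∀ x ∈ t, x ∈ B := fun x hx => htB hx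
  set g : {x // x ∈ t} → B := fun x => ⟨x.1, htB' x.1 x.2⟩ with hg
  have hginj : Function.Injective g := by
    intro a b h
    have h2 := Subtype.ext_iff.1 h
    exact Subtype.ext h2
  -- the representation of z
  set l : B →₀ ℚ := b.repr z with hl
  -- (1) l has value r on the elements of t
  have hlval : ∀ x : {x // x ∈ t}, l (g x) = r := by
    intro x₀
    have hz2 : z = ∑ x ∈ t.attach, r • b (g x) := by
      rw [hz, hs₀, Finset.mul_sum, ← Finset.sum_attach t (fun x => (r:ℝ) * x)]
      exact Finset.sum_congr rfl fun x _ => by rw [hb, Rat.smul_def]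
    have hlz : l = ∑ x ∈ t.attach, r • Finsupp.single (g x) (1:ℚ) := by
      rw [hl, hz2, map_sum]
      exact Finset.sum_congr rfl fun x _ => by rw [_root_.map_smul, b.repr_self]
    rw [hlz, Finsupp.finset_sum_apply]
    rw [Finset.sum_eq_single_of_mem x₀ (Finset.mem_attach _ _)]
    · simp
    · intro x _ hne
      have : g x ≠ g x₀ := fun h => hne (hginj h)
      simp [Finsupp.single_eq_of_ne' this]
  -- hence t.card ≤ l.support.card
  have hcard1 : 2 * n + 1 ≤ l.support.card := by
    have hsub : t.attach.image g ⊆ l.support := by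
      intro j hj
      obtain ⟨x, _, rfl⟩ := Finset.mem_image.1 hj
      rw [Finsupp.mem_support_iff, hlval x]
      exact_mod_cast hr0'.ne'
    calc 2 * n + 1 = t.attach.card := by rw [Finset.card_attach, htcard]
      _ = (t.attach.image g).card := (Finset.card_image_of_injective _ hginj).symm
      _ ≤ l.support.card := Finset.card_le_card hsub
  -- (2) any element of S p has representation supported on ≤ n elements
  have hrep : ∀ u ∈ S p, (b.repr u).support.card ≤ n := by
    rintro u ⟨c, hc, rfl⟩
    beta_reduce
    have hcB : ∀ i, c i ∈ B := fun i => hc i (Set.mem_univ i)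
    have hu : ∑ i, (p.2 i : ℝ) * c i = ∑ i : Fin n, p.2 i • b ⟨c i, hcB i⟩ := by
      exact Finset.sum_congr rfl fun i _ => by rw [hb, Rat.smul_def]
    rw [hu, map_sum]
    calc (∑ i : Fin n, b.repr (p.2 i • b ⟨c i, hcB i⟩)).support.card
        ≤ (Finset.univ.biUnion fun i : Fin n =>
            (b.repr (p.2 i • b ⟨c i, hcB i⟩)).support).card :=
          Finset.card_le_card Finsupp.support_finset_sum
      _ ≤ ∑ i : Fin n, (b.repr (p.2 i • b ⟨c i, hcB i⟩)).support.card :=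
            Finset.card_biUnion_le
      _ ≤ ∑ i : Fin n, 1 := by
            refine Finset.sum_le_sum fun i _ => ?_
            rw [_root_.map_smul, b.repr_self]
            exact le_trans (Finset.card_le_card (Finsupp.support_smul.trans
              Finsupp.support_single_subset)) (by simp)
        _ = n := by simp
  -- but z = u - v with u, v ∈ S p
  obtain ⟨u, hu, v, hv, huv⟩ := Set.mem_sub.1 hzmem
  have hcard2 : l.support.card ≤ 2 * n := by
    have hlz : l = b.repr u - b.repr v := by rw [hl, ← huv, map_sub]
    calc l.support.card ≤ ((b.repr u).support ∪ (b.repr v).support).card :=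
          Finset.card_le_card (by rw [hlz]; exact Finsupp.support_sub)
      _ ≤ (b.repr u).support.card + (b.repr v).support.card := Finset.card_union_le _ _
      _ ≤ n + n := Nat.add_le_add (hrep u hu) (hrep v hv)
      _ = 2 * n := by ring
  omega
end

section
/- For r ∈ (0, 1/2), the Cantor-like set C_r, obtained by the iterated construction where each interval [a,b] is replaced by [a, a+r(b-a)] ∪ [b-r(b-a), b] starting from [0,1], has Hausdorff dimension -1/log₂ r (equivalently, log(2)/log(1/r)). -/
open MeasureTheory Filter Set
open scoped ENNReal Pointwise Cardinal

noncomputable def codeMap (r : ℝ) (b : ℕ → Bool) : ℝ :=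
  ∑' i, (if b i then 1 - r else 0) * r ^ i

section basic
variable {r : ℝ} (h0 : 0 < r) (h1 : r < 1)

lemma term_nonneg (b : ℕ → Bool) (i : ℕ) (h1 : r < 1) (h0 : 0 ≤ r) :
    0 ≤ (if b i then 1 - r else 0) * r ^ i := by
  apply mul_nonneg _ (pow_nonneg h0 i)
  split <;> linarith

lemma term_le (b : ℕ → Bool) (i : ℕ) (h1 : r < 1) (h0 : 0 ≤ r) :
    (if b i then 1 - r else 0) * r ^ i ≤ (1 - r) * r ^ i := by
  apply mul_le_mul_of_nonneg_right _ (pow_nonneg h0 i)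
  split <;> linarith

lemma summable_code (b : ℕ → Bool) (h0 : 0 ≤ r) (h1 : r < 1) :
    Summable fun i => (if b i then 1 - r else 0) * r ^ i := by
  apply Summable.of_nonneg_of_le (term_nonneg b · h1 h0) (term_le b · h1 h0)
  exact (summable_geometric_of_lt_one h0 h1).mul_left _

lemma codeMap_nonneg (b : ℕ → Bool) (h0 : 0 ≤ r) (h1 : r < 1) : 0 ≤ codeMap r b :=
  tsum_nonneg (term_nonneg b · h1 h0)

lemma codeMap_le_one (b : ℕ → Bool) (h0 : 0 ≤ r) (h1 : r < 1) : codeMap r b ≤ 1 := by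
  have := Summable.tsum_le_tsum (term_le b · h1 h0) (summable_code b h0 h1)
    ((summable_geometric_of_lt_one h0 h1).mul_left _)
  calc codeMap r b ≤ ∑' i, (1 - r) * r ^ i := this
    _ = (1 - r) * (1 - r)⁻¹ := by rw [tsum_mul_left, tsum_geometric_of_lt_one h0 h1]
    _ ≤ 1 := by
        rw [mul_inv_cancel₀ (by linarith)]

lemma codeMap_succ (b : ℕ → Bool) (h0 : 0 ≤ r) (h1 : r < 1) :
    codeMap r b = (if b 0 then 1 - r else 0) + r * codeMap r (fun i => b (i + 1)) := by
  rw [codeMap, Summable.tsum_eq_zero_add (summable_code b h0 h1)]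
  simp only [pow_zero, mul_one, pow_succ]
  congr 1
  rw [codeMap, ← tsum_mul_left]
  congr 1; ext i; ring

lemma codeMap_take (b : ℕ → Bool) (h0 : 0 ≤ r) (h1 : r < 1) (k : ℕ) :
    codeMap r b = leftEnd r (List.ofFn fun i : Fin k => b i)
      + r ^ k * codeMap r (fun i => b (i + k)) := by
  induction k generalizing b with
  | zero => simp [leftEnd]
  | succ k ih =>
    rw [codeMap_succ b h0 h1, ih (fun i => b (i + 1))]
    rw [List.ofFn_succ]
    simp only [leftEnd, Fin.val_succ, Fin.val_zero]
    have : (fun i => b (i + k + 1)) = fun i => b (i + (k + 1)) := by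
      ext i; congr 1
    rw [this]
    ring_nf
    congr

end basic

section dist
variable {r : ℝ}

lemma codeMap_sub_eq (h0 : 0 ≤ r) (h1 : r < 1) (b c : ℕ → Bool) (k : ℕ)
    (hbc : ∀ i < k, b i = c i) :
    codeMap r b - codeMap r c
      = r ^ k * (codeMap r (fun i => b (i + k)) - codeMap r (fun i => c (i + k))) := by
  rw [codeMap_take b h0 h1 k, codeMap_take c h0 h1 k]
  have : (List.ofFn fun i : Fin k => b i) = List.ofFn fun i : Fin k => c i := by
    congr 1; funext i; exact hbc i i.isLt
  rw [this]; ring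

lemma abs_codeMap_sub_le (h0 : 0 ≤ r) (h1 : r < 1) (b c : ℕ → Bool) (k : ℕ)
    (hbc : ∀ i < k, b i = c i) :
    |codeMap r b - codeMap r c| ≤ r ^ k := by
  rw [codeMap_sub_eq h0 h1 b c k hbc, abs_mul, abs_of_nonneg (pow_nonneg h0 k)]
  have hA := codeMap_nonneg (r := r) (fun i => b (i + k)) h0 h1
  have hA' := codeMap_le_one (r := r) (fun i => b (i + k)) h0 h1
  have hB := codeMap_nonneg (r := r) (fun i => c (i + k)) h0 h1
  have hB' := codeMap_le_one (r := r) (fun i => c (i + k)) h0 h1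
  have habs1 : |codeMap r (fun i => b (i + k)) - codeMap r (fun i => c (i + k))| ≤ 1 :=
    abs_sub_le_iff.2 ⟨by linarith, by linarith⟩
  exact mul_le_of_le_one_right (pow_nonneg h0 k) habs1

lemma abs_codeMap_sub_ge (h0 : 0 ≤ r) (h2 : r < 1/2) (b c : ℕ → Bool) (k : ℕ)
    (hbc : ∀ i < k, b i = c i) (hk : b k ≠ c k) :
    (1 - 2*r) * r ^ k ≤ |codeMap r b - codeMap r c| := by
  have h1 : r < 1 := by linarith
  rw [codeMap_sub_eq h0 h1 b c k hbc, abs_mul, abs_of_nonneg (pow_nonneg h0 k)]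
  rw [mul_comm (1 - 2*r)]
  apply mul_le_mul_of_nonneg_left _ (pow_nonneg h0 k)
  set A := codeMap r (fun i => b (i + k)) with hAdef
  set B := codeMap r (fun i => c (i + k)) with hBdef
  have hA2 : A = (if b k then 1 - r else 0) + r * codeMap r (fun i => b (i + 1 + k)) := by
    rw [hAdef, codeMap_succ _ h0 h1]; norm_num
  have hB2 : B = (if c k then 1 - r else 0) + r * codeMap r (fun i => c (i + 1 + k)) := by
    rw [hBdef, codeMap_succ _ h0 h1]; norm_num
  have hA'0 := codeMap_nonneg (r := r) (fun i => b (i + 1 + k)) h0 h1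
  have hA'1 := codeMap_le_one (r := r) (fun i => b (i + 1 + k)) h0 h1
  have hB'0 := codeMap_nonneg (r := r) (fun i => c (i + 1 + k)) h0 h1
  have hB'1 := codeMap_le_one (r := r) (fun i => c (i + 1 + k)) h0 h1
  have hrA0 : 0 ≤ r * codeMap r (fun i => b (i + 1 + k)) := mul_nonneg h0 hA'0
  have hrA1 : r * codeMap r (fun i => b (i + 1 + k)) ≤ r := mul_le_of_le_one_right h0 hA'1
  have hrB0 : 0 ≤ r * codeMap r (fun i => c (i + 1 + k)) := mul_nonneg h0 hB'0
  have hrB1 : r * codeMap r (fun i => c (i + 1 + k)) ≤ r := mul_le_of_le_one_right h0 hB'1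
  cases hbv : b k with
  | false =>
    have hcv : c k = true := by
      cases hcv : c k
      · exact absurd (hbv.trans hcv.symm) hk
      · rfl
    rw [hbv] at hA2; rw [hcv] at hB2; norm_num at hA2 hB2
    rw [abs_sub_comm, abs_of_nonneg (by linarith)]
    linarith
  | true =>
    have hcv : c k = false := by
      cases hcv : c k
      · rfl
      · exact absurd (hbv.trans hcv.symm) hk
    rw [hbv] at hA2; rw [hcv] at hB2; norm_num at hA2 hB2
    rw [abs_of_nonneg (by linarith)]
    linarith

lemma codeMap_injective (h0 : 0 < r) (h2 : r < 1/2) : Function.Injective (codeMap r) := by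
  intro b c hbc
  by_contra hne
  have hne' : ∃ k, b k ≠ c k := by
    by_contra h; push_neg at h; exact hne (funext h)
  have hk := Nat.find_spec hne'
  have habs := abs_codeMap_sub_ge h0.le h2 b c (Nat.find hne')
    (fun i hi => by simpa using Nat.find_min hne' hi) hk
  rw [hbc, sub_self, abs_zero] at habs
  have : (0:ℝ) < (1 - 2*r) * r ^ Nat.find hne' := by
    apply mul_pos (by linarith) (pow_pos h0 _)
  linarith

end dist

section surj

noncomputable def halfShift (t : ℝ) : ℝ := 2 * t - (if (1:ℝ)/2 ≤ t then 1 else 0)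

noncomputable def dig (t : ℝ) : ℕ → Bool
  | 0 => decide ((1:ℝ)/2 ≤ t)
  | n + 1 => dig (halfShift t) n

lemma halfShift_mem {t : ℝ} (ht : t ∈ Set.Icc (0:ℝ) 1) : halfShift t ∈ Set.Icc (0:ℝ) 1 := by
  obtain ⟨h0, h1⟩ := ht
  by_cases h : (1:ℝ)/2 ≤ t
  · rw [halfShift, if_pos h]; constructor <;> linarith
  · rw [halfShift, if_neg h]; push_neg at h; constructor <;> linarith

lemma dig_shift (t : ℝ) : (fun i => dig t (i + 1)) = dig (halfShift t) := rfl

lemma dig_approx : ∀ n : ℕ, ∀ t ∈ Set.Icc (0:ℝ) 1,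
    |t - codeMap (1/2) (dig t)| ≤ (1/2) ^ n := by
  have h0 : (0:ℝ) ≤ 1/2 := by norm_num
  have h1 : (1:ℝ)/2 < 1 := by norm_num
  intro n
  induction n with
  | zero =>
    intro t ht
    have := codeMap_nonneg (r := 1/2) (dig t) h0 h1
    have := codeMap_le_one (r := 1/2) (dig t) h0 h1
    rw [pow_zero, abs_sub_le_iff]
    constructor <;> [skip; skip] <;> obtain ⟨ht0, ht1⟩ := ht <;> linarith
  | succ n ih =>
    intro t ht
    rw [codeMap_succ _ h0 h1, dig_shift]
    have key : t - ((if dig t 0 then 1 - 1/2 else 0) + 1/2 * codeMap (1/2) (dig (halfShift t)))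
        = 1/2 * (halfShift t - codeMap (1/2) (dig (halfShift t))) := by
      by_cases h : (1:ℝ)/2 ≤ t
      · rw [halfShift, if_pos h, if_pos (by simp [dig]; linarith : dig t 0 = true)]; ring
      · rw [halfShift, if_neg h, if_neg (by simp [dig]; push_neg at h; linarith : ¬ dig t 0 = true)]; ring
    rw [key, abs_mul, abs_of_nonneg h0]
    have := ih (halfShift t) (halfShift_mem ht)
    calc 1/2 * |halfShift t - codeMap (1/2) (dig (halfShift t))| ≤ 1/2 * (1/2)^n := by linarith
      _ = (1/2)^(n+1) := by ring

lemma codeMap_half_surj {t : ℝ} (ht : t ∈ Set.Icc (0:ℝ) 1) : codeMap (1/2) (dig t) = t := by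
  have h : |t - codeMap (1/2) (dig t)| ≤ 0 := by
    refine ge_of_tendsto' (tendsto_pow_atTop_nhds_zero_of_lt_one (by norm_num) (by norm_num))
      fun n => dig_approx n t ht
  have := abs_nonneg (t - codeMap (1/2) (dig t))
  have : t - codeMap (1/2) (dig t) = 0 := abs_eq_zero.1 (le_antisymm h this)
  linarith

end surj

section main
variable {r : ℝ}

noncomputable def cantorDim (r : ℝ) : ℝ := Real.log 2 / Real.log r⁻¹

lemma log_inv_pos (h0 : 0 < r) (h2 : r < 1/2) : 0 < Real.log r⁻¹ :=
  Real.log_pos (one_lt_inv₀ h0 |>.2 (by linarith))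

lemma cantorDim_pos (h0 : 0 < r) (h2 : r < 1/2) : 0 < cantorDim r :=
  div_pos (Real.log_pos one_lt_two) (log_inv_pos h0 h2)

lemma rpow_cantorDim (h0 : 0 < r) (h2 : r < 1/2) : r ^ cantorDim r = 1/2 := by
  rw [cantorDim, Real.rpow_def_of_pos h0, Real.log_inv]
  have hlog : Real.log r < 0 := Real.log_neg h0 (by linarith)
  have hne : Real.log r ≠ 0 := ne_of_lt hlog
  have : Real.log r * (Real.log 2 / -Real.log r) = -Real.log 2 := by
    rw [div_neg, mul_neg, ← mul_div_assoc, mul_comm, mul_div_assoc, div_self hne, mul_one]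
  rw [this, Real.exp_neg, Real.exp_log two_pos]
  norm_num

lemma holder_key (h0 : 0 < r) (h2 : r < 1/2) (b c : ℕ → Bool) :
    |codeMap (1/2) b - codeMap (1/2) c|
      ≤ (1 - 2*r) ^ (-cantorDim r) * |codeMap r b - codeMap r c| ^ cantorDim r := by
  set d := cantorDim r with hd
  have hd0 : 0 < d := cantorDim_pos h0 h2
  have h12 : 0 < 1 - 2*r := by linarith
  by_cases hbc : b = c
  · subst hbc; simp [Real.zero_rpow hd0.ne']
  have hne : ∃ k, b k ≠ c k := by
    by_contra h; push_neg at h; exact hbc (funext h)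
  set k := Nat.find hne with hk
  have hpre : ∀ i < k, b i = c i := fun i hi => by simpa using Nat.find_min hne hi
  have hub : |codeMap (1/2) b - codeMap (1/2) c| ≤ (1/2)^k :=
    abs_codeMap_sub_le (by norm_num) (by norm_num) b c k hpre
  have hlb : (1 - 2*r) * r^k ≤ |codeMap r b - codeMap r c| :=
    abs_codeMap_sub_ge h0.le h2 b c k hpre (Nat.find_spec hne)
  have hrk : ((1:ℝ)/2)^k = (r^k) ^ d := by
    rw [← rpow_cantorDim h0 h2, ← Real.rpow_natCast (r ^ d) k, ← Real.rpow_natCast r k,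
      ← Real.rpow_mul h0.le, ← Real.rpow_mul h0.le, mul_comm]
  calc |codeMap (1/2) b - codeMap (1/2) c| ≤ (r^k) ^ d := by rw [← hrk]; exact hub
    _ = (1 - 2*r) ^ (-d) * ((1 - 2*r) * r^k) ^ d := by
        rw [Real.mul_rpow h12.le (pow_nonneg h0.le k), ← mul_assoc, ← Real.rpow_add h12]
        norm_num
    _ ≤ (1 - 2*r) ^ (-d) * |codeMap r b - codeMap r c| ^ d :=
        mul_le_mul_of_nonneg_left (Real.rpow_le_rpow (by positivity) hlb hd0.le)
          (Real.rpow_nonneg h12.le _)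

lemma codeMap_mem_cantor (h0 : 0 < r) (h1 : r < 1) (b : ℕ → Bool) :
    codeMap r b ∈ cantorLikeSet r := by
  rw [cantorLikeSet, Set.mem_iInter]
  intro k
  rw [cantorStage]
  refine Set.mem_biUnion
    (show (List.ofFn fun i : Fin k => b i) ∈ {w : List Bool | w.length = k} by simp) ?_
  have htail0 := codeMap_nonneg (r := r) (fun i => b (i + k)) h0.le h1
  have htail1 := codeMap_le_one (r := r) (fun i => b (i + k)) h0.le h1
  have hrk := pow_nonneg h0.le (n := k)
  constructor
  · rw [codeMap_take b h0.le h1 k]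
    nlinarith
  · rw [codeMap_take b h0.le h1 k]
    nlinarith

end main

section bounds
variable {r : ℝ}

lemma pow_rpow_cantorDim (h0 : 0 < r) (h2 : r < 1/2) (k : ℕ) :
    ((r:ℝ) ^ k) ^ cantorDim r = (1/2) ^ k := by
  rw [← rpow_cantorDim h0 h2, ← Real.rpow_natCast (r ^ cantorDim r) k, ← Real.rpow_natCast r k,
    ← Real.rpow_mul h0.le, ← Real.rpow_mul h0.le, mul_comm]

lemma lower_bound (h0 : 0 < r) (h2 : r < 1/2) :
    ENNReal.ofReal (cantorDim r) ≤ dimH (cantorLikeSet r) := by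
  classical
  set d := cantorDim r with hd
  have hd0 : 0 < d := cantorDim_pos h0 h2
  have h1 : r < 1 := by linarith
  set s : Set ℝ := codeMap r '' Set.univ with hs
  set g : ℝ → ℝ := fun x => if hx : ∃ b, codeMap r b = x then codeMap (1/2) hx.choose else 0
    with hg
  set C : NNReal := ((1 - 2*r) ^ (-d)).toNNReal with hC
  set D : NNReal := d.toNNReal with hD
  have hDco : (D:ℝ) = d := Real.coe_toNNReal _ hd0.le
  have hD0 : (0:NNReal) < D := by
    rw [hD]; exact Real.toNNReal_pos.2 hd0
  have hg_eq : ∀ b : ℕ → Bool, g (codeMap r b) = codeMap (1/2) b := by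
    intro b
    have hx : ∃ b', codeMap r b' = codeMap r b := ⟨b, rfl⟩
    rw [hg]; dsimp only
    rw [dif_pos hx]
    congr 1
    exact codeMap_injective h0 h2 hx.choose_spec
  have holder : HolderOnWith C D g s := by
    rintro x ⟨b, -, rfl⟩ y ⟨c, -, rfl⟩
    rw [hg_eq b, hg_eq c, edist_dist, edist_dist, Real.dist_eq, Real.dist_eq]
    calc ENNReal.ofReal |codeMap (1/2) b - codeMap (1/2) c|
        ≤ ENNReal.ofReal ((1 - 2*r) ^ (-d) * |codeMap r b - codeMap r c| ^ d) :=
          ENNReal.ofReal_le_ofReal (holder_key h0 h2 b c)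
      _ = ↑C * ENNReal.ofReal (|codeMap r b - codeMap r c| ^ d) := by
          rw [ENNReal.ofReal_mul (Real.rpow_nonneg (by linarith) _)]
          rfl
      _ = ↑C * ENNReal.ofReal |codeMap r b - codeMap r c| ^ (D:ℝ) := by
          rw [hDco, ← ENNReal.ofReal_rpow_of_nonneg (abs_nonneg _) hd0.le]
  have himg : Set.Icc (0:ℝ) 1 ⊆ g '' s := by
    intro t ht
    refine ⟨codeMap r (dig t), ⟨dig t, Set.mem_univ _, rfl⟩, ?_⟩
    rw [hg_eq, codeMap_half_surj ht]
  have hsub : s ⊆ cantorLikeSet r := by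
    rintro x ⟨b, -, rfl⟩; exact codeMap_mem_cantor h0 h1 b
  have hdim1 : dimH (Set.Icc (0:ℝ) 1) = 1 := by
    rw [Real.dimH_of_nonempty_interior (by rw [interior_Icc]; exact Set.nonempty_Ioo.2 one_pos)]
    simp
  have chain : (1:ℝ≥0∞) ≤ dimH (cantorLikeSet r) / D := by
    calc (1:ℝ≥0∞) = dimH (Set.Icc (0:ℝ) 1) := hdim1.symm
      _ ≤ dimH (g '' s) := dimH_mono himg
      _ ≤ dimH s / D := holder.dimH_image_le hD0
      _ ≤ dimH (cantorLikeSet r) / D := by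
          gcongr
  have hfin := (ENNReal.le_div_iff_mul_le (Or.inl (by exact_mod_cast hD0.ne'))
    (Or.inl ENNReal.coe_ne_top)).1 chain
  rw [one_mul] at hfin
  have : ENNReal.ofReal d = (D : ℝ≥0∞) := rfl
  rwa [this]

end bounds

section upper
variable {r : ℝ}

lemma upper_bound (h0 : 0 < r) (h2 : r < 1/2) :
    dimH (cantorLikeSet r) ≤ ENNReal.ofReal (cantorDim r) := by
  set d := cantorDim r with hd
  have hd0 : 0 < d := cantorDim_pos h0 h2
  have h1 : r < 1 := by linarith
  have hmeas : μH[d] (cantorLikeSet r) ≤ 1 := by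
    have htend : Tendsto (fun k : ℕ => ENNReal.ofReal (r ^ k)) atTop (nhds 0) := by
      have h := ENNReal.tendsto_ofReal
        (tendsto_pow_atTop_nhds_zero_of_lt_one h0.le h1)
      simpa using h
    have key := Measure.hausdorffMeasure_le_liminf_sum (ι := fun k => List.Vector Bool k) d
      (cantorLikeSet r) (l := atTop) (fun k => ENNReal.ofReal (r ^ k)) htend
      (fun k w => Set.Icc (leftEnd r w.1) (leftEnd r w.1 + r ^ k))
      (Eventually.of_forall fun k w => by
        rw [Real.ediam_Icc, add_sub_cancel_left])
      (Eventually.of_forall fun k x hx => by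
        have hx' : x ∈ cantorStage r k := Set.mem_iInter.1 hx k
        rw [cantorStage] at hx'
        obtain ⟨w, hw, hmem⟩ := Set.mem_iUnion₂.1 hx'
        exact Set.mem_iUnion.2 ⟨⟨w, hw⟩, hmem⟩)
    refine key.trans ?_
    have hsum : ∀ k : ℕ, (∑ w : List.Vector Bool k,
        Metric.ediam (Set.Icc (leftEnd r w.1) (leftEnd r w.1 + r ^ k)) ^ d) = 1 := by
      intro k
      have hdiam : ∀ w : List.Vector Bool k,
          Metric.ediam (Set.Icc (leftEnd r w.1) (leftEnd r w.1 + r ^ k)) ^ d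
            = ENNReal.ofReal ((1/2) ^ k) := by
        intro w
        rw [Real.ediam_Icc, add_sub_cancel_left,
          ENNReal.ofReal_rpow_of_nonneg (pow_nonneg h0.le k) hd0.le,
          pow_rpow_cantorDim h0 h2 k]
      rw [Finset.sum_congr rfl fun w _ => hdiam w, Finset.sum_const, Finset.card_univ,
        card_vector, Fintype.card_bool, nsmul_eq_mul]
      rw [ENNReal.ofReal_pow (by norm_num), Nat.cast_pow, Nat.cast_ofNat, ← mul_pow]
      have : (2:ℝ≥0∞) * ENNReal.ofReal (1/2) = 1 := by
        rw [show ((1:ℝ)/2) = 2⁻¹ by norm_num, ← ENNReal.ofReal_ofNat 2,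
          ← ENNReal.ofReal_mul (by norm_num)]
        norm_num
      rw [this, one_pow]
    simp_rw [hsum]
    simp [liminf_const]
  have hne : μH[((d.toNNReal : NNReal) : ℝ)] (cantorLikeSet r) ≠ ⊤ := by
    rw [Real.coe_toNNReal _ hd0.le]
    exact (hmeas.trans_lt ENNReal.one_lt_top).ne
  have := dimH_le_of_hausdorffMeasure_ne_top hne
  rwa [show ((d.toNNReal : NNReal) : ℝ≥0∞) = ENNReal.ofReal d from rfl] at this

end upper

theorem dimH_cantorLikeSet (r : ℝ) (hr : r ∈ Set.Ioo (0 : ℝ) (1 / 2)) :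
    dimH (cantorLikeSet r) = ENNReal.ofReal (Real.log 2 / Real.log r⁻¹) :=
  le_antisymm (upper_bound hr.1 hr.2) (lower_bound hr.1 hr.2)
end

section
/- For every natural number k, C_{1/3,k} + C_{1/3,k} = [0,2], where C_{1/3,k} is the k-th stage of the middle-thirds Cantor set construction. -/
open MeasureTheory Filter Set
open scoped ENNReal Pointwise Cardinal

lemma myIccAdd {a b c d : ℝ} (hab : a ≤ b) (hcd : c ≤ d) :
    Set.Icc a b + Set.Icc c d = Set.Icc (a + c) (b + d) := by
  ext x
  simp only [Set.mem_add, Set.mem_Icc]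
  constructor
  · rintro ⟨p, ⟨hp1, hp2⟩, q, ⟨hq1, hq2⟩, rfl⟩
    constructor <;> linarith
  · rintro ⟨h1, h2⟩
    refine ⟨max a (x - d), ⟨le_max_left _ _, max_le hab (by linarith)⟩,
      x - max a (x - d), ⟨?_, ?_⟩, by ring⟩
    · rcases le_total a (x - d) with h | h
      · rw [max_eq_right h]; linarith
      · rw [max_eq_left h]; linarith
    · have := le_max_right a (x - d); linarith

lemma mySmulAdd (c : ℝ) (A B : Set ℝ) : c • A + c • B = c • (A + B) := by
  ext x
  simp only [Set.mem_add, Set.mem_smul_set, smul_eq_mul]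
  constructor
  · rintro ⟨y, ⟨p, hp, rfl⟩, z, ⟨q, hq, rfl⟩, rfl⟩
    exact ⟨p + q, ⟨p, hp, q, hq, rfl⟩, by ring⟩
  · rintro ⟨y, ⟨p, hp, q, hq, rfl⟩, rfl⟩
    exact ⟨c * p, ⟨p, hp, rfl⟩, c * q, ⟨q, hq, rfl⟩, by ring⟩

lemma mem_stage {r x : ℝ} {k : ℕ} : x ∈ cantorStage r k ↔
    ∃ w : List Bool, w.length = k ∧ x ∈ Set.Icc (leftEnd r w) (leftEnd r w + r ^ k) := by
  simp only [cantorStage, Set.mem_iUnion, Set.mem_setOf_eq, exists_prop]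

lemma stage_succ (k : ℕ) :
    cantorStage (1/3 : ℝ) (k+1) =
      (1/3 : ℝ) • cantorStage (1/3) k ∪ ({(2/3 : ℝ)} + (1/3 : ℝ) • cantorStage (1/3) k) := by
  have hp : ((1:ℝ)/3) ^ (k+1) = (1/3) * (1/3) ^ k := by ring
  ext x
  constructor
  · intro hx
    rcases mem_stage.mp hx with ⟨w, hw, hxw⟩
    rcases w with _ | ⟨b, t⟩
    · simp at hw
    · have ht : t.length = k := by simpa using hw
      have hmem : (3 : ℝ) * (x - (if b then (2:ℝ)/3 else 0)) ∈ cantorStage (1/3) k := by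
        apply mem_stage.mpr
        refine ⟨t, ht, ?_⟩
        have hl : leftEnd (1/3) (b :: t) =
            (if b then (2:ℝ)/3 else 0) + (1/3) * leftEnd (1/3) t := by
          simp [leftEnd]; norm_num
        rcases hxw with ⟨h1, h2⟩
        rw [hl] at h1 h2
        rw [hp] at h2
        rw [Set.mem_Icc]
        cases b
        · simp only [Bool.false_eq_true, if_false] at h1 h2 ⊢
          constructor <;> linarith
        · simp only [if_true] at h1 h2 ⊢
          constructor <;> linarith
      cases b with
      | false =>
        left
        exact Set.mem_smul_set.mpr ⟨3 * (x - 0), by simpa using hmem,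
          by simp only [smul_eq_mul]; ring⟩
      | true =>
        right
        refine ⟨2/3, rfl, (1/3 : ℝ) * (3 * (x - 2/3)),
          Set.mem_smul_set.mpr ⟨3 * (x - 2/3), by simpa using hmem,
            by simp only [smul_eq_mul]⟩, by ring⟩
  · intro hx
    have key : ∀ (b : Bool), ∀ y ∈ cantorStage (1/3 : ℝ) k,
        (if b then (2:ℝ)/3 else 0) + (1/3) * y ∈ cantorStage (1/3 : ℝ) (k+1) := by
      intro b y hy
      rcases mem_stage.mp hy with ⟨t, ht, h1, h2⟩
      apply mem_stage.mpr
      refine ⟨b :: t, by simp [ht], ?_⟩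
      have hl : leftEnd (1/3) (b :: t) =
          (if b then (2:ℝ)/3 else 0) + (1/3) * leftEnd (1/3) t := by
        simp [leftEnd]; norm_num
      rw [Set.mem_Icc, hl, hp]
      cases b
      · simp only [Bool.false_eq_true, if_false]
        constructor <;> linarith
      · simp only [if_true]
        constructor <;> linarith
    rcases hx with hx | hx
    · rcases hx with ⟨p, hp', rfl⟩
      have := key false p hp'
      simpa [smul_eq_mul] using this
    · rcases hx with ⟨c, hc, z, hz, rfl⟩
      rcases hz with ⟨p, hp', rfl⟩
      rw [Set.mem_singleton_iff] at hc
      subst hc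
      have := key true p hp'
      simpa [smul_eq_mul] using this

theorem cantorStage_add_cantorStage (k : ℕ) :
    cantorStage (1 / 3) k + cantorStage (1 / 3) k = Set.Icc (0 : ℝ) 2 := by
  induction k with
  | zero =>
    have h0 : cantorStage (1/3 : ℝ) 0 = Set.Icc (0:ℝ) 1 := by
      ext x
      rw [mem_stage]
      constructor
      · rintro ⟨w, hw, hx⟩
        rw [List.length_eq_zero_iff] at hw
        subst hw
        simpa [leftEnd] using hx
      · intro hx
        exact ⟨[], rfl, by simpa [leftEnd] using hx⟩
    rw [h0, myIccAdd (by norm_num) (by norm_num)]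
    norm_num
  | succ k ih =>
    rw [stage_succ]
    set T : Set ℝ := (1/3 : ℝ) • cantorStage (1/3) k with hT
    have hTT : T + T = Set.Icc (0:ℝ) (2/3) := by
      rw [hT, mySmulAdd, ih, LinearOrderedField.smul_Icc (by norm_num : (0:ℝ) < 1/3)]
      norm_num
    have hsing : ({(2/3 : ℝ)} : Set ℝ) = Set.Icc (2/3 : ℝ) (2/3) := by simp
    rw [Set.union_add, Set.add_union, Set.add_union]
    have h1 : T + ({(2/3:ℝ)} + T) = Set.Icc (2/3 : ℝ) (4/3) := by
      rw [← add_assoc, add_comm T ({(2/3:ℝ)} : Set ℝ), add_assoc, hTT, hsing,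
        myIccAdd (by norm_num) (by norm_num)]
      norm_num
    have h2 : ({(2/3:ℝ)} + T) + T = Set.Icc (2/3 : ℝ) (4/3) := by
      rw [add_assoc, hTT, hsing, myIccAdd (by norm_num) (by norm_num)]
      norm_num
    have h3 : ({(2/3:ℝ)} + T) + ({(2/3:ℝ)} + T) = Set.Icc (4/3 : ℝ) 2 := by
      rw [← add_assoc, add_assoc ({(2/3:ℝ)} : Set ℝ) T ({(2/3:ℝ)} : Set ℝ),
        add_comm T ({(2/3:ℝ)} : Set ℝ), ← add_assoc, add_assoc, hTT,
        Set.singleton_add_singleton,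
        show ({(2/3 + 2/3 : ℝ)} : Set ℝ) = Set.Icc (4/3 : ℝ) (4/3) by norm_num,
        myIccAdd (by norm_num) (by norm_num)]
      norm_num
    rw [hTT, h1, h2, h3]
    ext x
    simp only [Set.mem_union, Set.mem_Icc]
    constructor
    · rintro ((⟨h, h'⟩ | ⟨h, h'⟩) | (⟨h, h'⟩ | ⟨h, h'⟩)) <;> constructor <;> linarith
    · rintro ⟨h, h'⟩
      rcases le_total x (2/3) with h2 | h2
      · exact Or.inl (Or.inl ⟨h, h2⟩)
      · rcases le_total x (4/3) with h4 | h4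
        · exact Or.inl (Or.inr ⟨h2, h4⟩)
        · exact Or.inr (Or.inr ⟨h4, h'⟩)
end

section
/- If m ≥ 3 is an integer and r ∈ [1/m, 1/2), then the (m-1)-fold sumset C_r + ⋯ + C_r contains the interval [0, m-1]. -/
open MeasureTheory Filter Set
open scoped ENNReal Pointwise Cardinal Topology

lemma leftEnd_ofFn_s8 (r : ℝ) (b : ℕ → Bool) (K : ℕ) :
    leftEnd r (List.ofFn fun j : Fin K => b j) =
      ∑ j ∈ Finset.range K, (if b j then 1 - r else 0) * r ^ j := by
  induction K generalizing b with
  | zero => simp [leftEnd]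
  | succ K ih =>
      rw [List.ofFn_succ]
      show (if b 0 then 1 - r else 0) +
          r * leftEnd r (List.ofFn fun j : Fin K => b (j + 1)) = _
      rw [ih (fun j => b (j + 1)), Finset.sum_range_succ', pow_zero, mul_one,
        Finset.mul_sum, add_comm]
      congr 1
      exact Finset.sum_congr rfl fun j _ => by ring

lemma summable_bits {r : ℝ} (hr0 : 0 < r) (hr1 : r < 1) (c : ℕ → Bool) :
    Summable fun k => (if c k then 1 - r else 0) * r ^ k := by
  apply Summable.of_nonneg_of_le (fun k => ?_) (fun k => ?_)
    (summable_geometric_of_lt_one hr0.le hr1)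
  · have h1 : (0:ℝ) ≤ 1 - r := by linarith
    have h2 : (0:ℝ) ≤ r ^ k := by positivity
    split <;> nlinarith
  · have h1 : (if c k then 1 - r else 0) ≤ 1 := by split <;> linarith
    have h2 : (0:ℝ) ≤ r ^ k := by positivity
    nlinarith

lemma mem_cantorLikeSet_of_bits {r : ℝ} (hr0 : 0 < r) (hr1 : r < 1) (b : ℕ → Bool) :
    (∑' k, (if b k then 1 - r else 0) * r ^ k) ∈ cantorLikeSet r := by
  have hr1' : (0:ℝ) < 1 - r := by linarith
  set f : ℕ → ℝ := fun k => (if b k then 1 - r else 0) * r ^ k with hf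
  have hsum : Summable f := summable_bits hr0 hr1 b
  refine Set.mem_iInter.2 fun K => ?_
  refine Set.mem_biUnion (show (List.ofFn fun j : Fin K => b j) ∈
    {w : List Bool | w.length = K} from by simp) ?_
  rw [leftEnd_ofFn_s8]
  have hsplit : (∑ k ∈ Finset.range K, f k) + ∑' k, f (k + K) = ∑' k, f k :=
    hsum.sum_add_tsum_nat_add K
  have htail_nonneg : 0 ≤ ∑' k, f (k + K) := by
    refine tsum_nonneg fun k => ?_
    have h1 : (0:ℝ) ≤ 1 - r := by linarith
    have h2 : (0:ℝ) ≤ r ^ (k + K) := by positivity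
    simp only [hf]
    split <;> nlinarith
  have htail_le : (∑' k, f (k + K)) ≤ r ^ K := by
    have hle : ∀ k, f (k + K) ≤ (1 - r) * r ^ K * r ^ k := by
      intro k
      simp only [hf]
      have h2 : (0:ℝ) ≤ r ^ (k + K) := by positivity
      have : r ^ (k + K) = r ^ K * r ^ k := by rw [pow_add]; ring
      split
      · exact le_of_eq (by rw [this]; ring)
      · nlinarith [pow_nonneg hr0.le K, pow_nonneg hr0.le k]
    have hsum2 : Summable fun k => (1 - r) * r ^ K * r ^ k :=
      (summable_geometric_of_lt_one hr0.le hr1).mul_left _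
    calc (∑' k, f (k + K)) ≤ ∑' k, (1 - r) * r ^ K * r ^ k :=
          Summable.tsum_le_tsum hle ((summable_nat_add_iff K).2 hsum) hsum2
      _ = (1 - r) * r ^ K * ∑' k : ℕ, r ^ k := tsum_mul_left
      _ = r ^ K := by
          rw [tsum_geometric_of_lt_one hr0.le hr1]
          field_simp
  constructor
  · linarith [hsplit, htail_nonneg]
  · linarith [hsplit, htail_le]

lemma exists_digits {r : ℝ} (n : ℕ) (hr0 : 0 < r) (hr1 : r < 1)
    (hnr : 1 - r ≤ n * r) (x : ℝ) (hx0 : 0 ≤ x) (hxn : x ≤ n) :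
    ∃ a : ℕ → ℕ, (∀ k, a k ≤ n) ∧ HasSum (fun k => (a k : ℝ) * r ^ k) (x / (1 - r)) := by
  have hr1' : (0:ℝ) < 1 - r := by linarith
  set M : ℝ := n / (1 - r) with hM
  let y : ℕ → ℝ := fun k => Nat.rec (x / (1 - r)) (fun _ p => (p - (min n ⌊p⌋₊ : ℕ)) / r) k
  set a : ℕ → ℕ := fun k => min n ⌊y k⌋₊ with ha
  have hystep : ∀ k, y (k + 1) = (y k - (a k : ℕ)) / r := fun k => rfl
  have h1rM : 1 / r ≤ M := by
    rw [hM, div_le_div_iff₀ hr0 hr1']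
    nlinarith
  have hinv : ∀ k, 0 ≤ y k ∧ y k ≤ M := by
    intro k
    induction k with
    | zero =>
        constructor
        · exact div_nonneg hx0 hr1'.le
        · exact (div_le_div_iff_of_pos_right hr1').2 hxn
    | succ k ih =>
        rw [hystep]
        rcases le_or_gt (⌊y k⌋₊) n with h | h
        · have hak : a k = ⌊y k⌋₊ := min_eq_right h
          have hfl : (⌊y k⌋₊ : ℝ) ≤ y k := Nat.floor_le ih.1
          have hfl2 : y k < ⌊y k⌋₊ + 1 := Nat.lt_floor_add_one _
          constructor
          · apply div_nonneg _ hr0.le; rw [hak]; linarith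
          · refine le_trans ?_ h1rM
            rw [div_le_div_iff₀ hr0 hr0, hak, one_mul]
            nlinarith
        · have hak : a k = n := min_eq_left h.le
          have hny : (n : ℝ) ≤ y k := by
            calc (n:ℝ) ≤ ⌊y k⌋₊ := by exact_mod_cast h.le
              _ ≤ y k := Nat.floor_le ih.1
          constructor
          · apply div_nonneg _ hr0.le; rw [hak]; linarith
          · have key : (M - n) / r = M := by
              rw [hM]; field_simp; ring
            rw [← key]
            have h3 : y k - (a k : ℝ) ≤ M - n := by rw [hak]; linarith [ih.2]
            exact (div_le_div_iff_of_pos_right hr0).2 h3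
    -- end induction
  have hpart : ∀ K, x / (1 - r) =
      (∑ k ∈ Finset.range K, (a k : ℝ) * r ^ k) + r ^ K * y K := by
    intro K
    induction K with
    | zero =>
        simp only [Finset.range_zero, Finset.sum_empty, pow_zero, one_mul, zero_add]
        rfl
    | succ K ih =>
        have hy : y K = (a K : ℝ) + r * y (K + 1) := by
          rw [hystep]; field_simp; ring
        rw [Finset.sum_range_succ]
        rw [ih, hy]
        ring
  have hsummable : Summable fun k => (a k : ℝ) * r ^ k := by
    apply Summable.of_nonneg_of_le (fun k => by positivity) (fun k => ?_)
      ((summable_geometric_of_lt_one hr0.le hr1).mul_left (n : ℝ))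
    have : (a k : ℝ) ≤ n := by exact_mod_cast min_le_left _ _
    have h2 : (0:ℝ) ≤ r ^ k := by positivity
    nlinarith
  refine ⟨a, fun k => min_le_left _ _, ?_⟩
  have htendsto0 : Tendsto (fun K => r ^ K * y K) atTop (𝓝 0) := by
    have hg : Tendsto (fun K : ℕ => r ^ K * M) atTop (𝓝 0) := by
      have := (tendsto_pow_atTop_nhds_zero_of_lt_one hr0.le hr1).mul_const M
      simpa using this
    refine squeeze_zero (fun K => mul_nonneg (by positivity) (hinv K).1)
      (fun K => ?_) hg
    have h2 : (0:ℝ) ≤ r ^ K := by positivity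
    nlinarith [(hinv K).2]
  have hps : Tendsto (fun K => ∑ k ∈ Finset.range K, (a k : ℝ) * r ^ k) atTop
      (𝓝 (x / (1 - r))) := by
    have : (fun K => ∑ k ∈ Finset.range K, (a k : ℝ) * r ^ k) =
        fun K => x / (1 - r) - r ^ K * y K := by
      funext K; rw [hpart K]; ring
    rw [this]
    simpa using (tendsto_const_nhds.sub htendsto0)
  have := hsummable.hasSum
  have h2 := this.tendsto_sum_nat
  have heq : (∑' k, (a k : ℝ) * r ^ k) = x / (1 - r) := tendsto_nhds_unique h2 hps
  rwa [heq] at this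

lemma fin_sum_ite (n a : ℕ) (c : ℝ) (h : a ≤ n) :
    ∑ i : Fin n, (if (i : ℕ) < a then c else 0) = a * c := by
  rw [Fin.sum_univ_eq_sum_range (fun j => if j < a then c else 0) n, ← Finset.sum_filter]
  have : (Finset.range n).filter (· < a) = Finset.range a := by
    ext i; simp [Finset.mem_filter, Finset.mem_range]; omega
  rw [this, Finset.sum_const, Finset.card_range, nsmul_eq_mul]

theorem sumset_cantorLikeSet_contains (m : ℕ) (hm : 3 ≤ m) (r : ℝ)
    (hr₁ : 1 / (m : ℝ) ≤ r) (hr₂ : r < 1 / 2) :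
    ∀ x ∈ Set.Icc (0 : ℝ) ((m : ℝ) - 1),
      ∃ f : Fin (m - 1) → ℝ, (∀ i, f i ∈ cantorLikeSet r) ∧ ∑ i, f i = x := by
  have hm0 : (0:ℝ) < m := by positivity
  have hr0 : 0 < r := lt_of_lt_of_le (by positivity) hr₁
  have hr1 : r < 1 := by linarith
  have hr1' : (0:ℝ) < 1 - r := by linarith
  have hcast : ((m - 1 : ℕ) : ℝ) = (m : ℝ) - 1 := by
    rw [Nat.cast_sub (by omega)]; simp
  have hmr : 1 ≤ (m : ℝ) * r := by
    rw [div_le_iff₀ hm0] at hr₁; linarith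
  have hnr : 1 - r ≤ ((m - 1 : ℕ) : ℝ) * r := by
    rw [hcast]; nlinarith
  intro x hx
  obtain ⟨a, ha, hsum⟩ := exists_digits (m - 1) hr0 hr1 hnr x hx.1 (by rw [hcast]; exact hx.2)
  refine ⟨fun i => ∑' k, (if (i : ℕ) < a k then 1 - r else 0) * r ^ k, fun i => ?_, ?_⟩
  · have := mem_cantorLikeSet_of_bits hr0 hr1 (fun k => decide ((i : ℕ) < a k))
    simpa using this
  · have hsummands : ∀ i : Fin (m - 1),
        Summable fun k => (if (i : ℕ) < a k then 1 - r else 0) * r ^ k := by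
      intro i
      have := summable_bits hr0 hr1 (fun k => decide ((i : ℕ) < a k))
      simpa using this
    rw [← Summable.tsum_finsetSum (fun i _ => hsummands i)]
    have hinner : ∀ k, (∑ i : Fin (m - 1), (if (i : ℕ) < a k then 1 - r else 0) * r ^ k)
        = (1 - r) * ((a k : ℝ) * r ^ k) := by
      intro k
      rw [← Finset.sum_mul, fin_sum_ite _ _ _ (ha k)]
      ring
    rw [tsum_congr hinner, (hsum.mul_left (1 - r)).tsum_eq]
    field_simp
end

section
/- The Continuum Hypothesis holds if and only if there exists a sequence (A_ξ)_{ξ<ω₁} of subsets of ℕ that is ≤_T-nondecreasing (α < ξ implies A_α ≤_T A_ξ) and cofinal in the Turing degrees (for every A ⊆ ℕ there is ξ < ω₁ with A ≤_T A_ξ). -/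
open MeasureTheory Filter Set
open scoped ENNReal Pointwise Cardinal

/-- Partial recursiveness relative to an oracle `O : ℕ →. ℕ` (Kleene-style). -/
inductive OracleRecursiveIn (O : ℕ →. ℕ) : (ℕ →. ℕ) → Prop
  | zero : OracleRecursiveIn O (pure 0)
  | succ : OracleRecursiveIn O Nat.succ
  | left : OracleRecursiveIn O ↑fun n : ℕ => n.unpair.1
  | right : OracleRecursiveIn O ↑fun n : ℕ => n.unpair.2
  | oracle : OracleRecursiveIn O O
  | pair {f g} : OracleRecursiveIn O f → OracleRecursiveIn O g →
      OracleRecursiveIn O fun n => Nat.pair <$> f n <*> g n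
  | comp {f g} : OracleRecursiveIn O f → OracleRecursiveIn O g → OracleRecursiveIn O fun n => g n >>= f
  | prec {f g} : OracleRecursiveIn O f → OracleRecursiveIn O g → OracleRecursiveIn O (Nat.unpaired fun a n =>
      n.rec (f a) fun y IH => do let i ← IH; g (Nat.pair a (Nat.pair y i)))
  | rfind {f} : OracleRecursiveIn O f →
      OracleRecursiveIn O fun a => Nat.rfind fun n => (fun m => m = 0) <$> f (Nat.pair a n)

open scoped Classical in
/-- The characteristic function of a set of naturals, as a partial function. -/
noncomputable def chi (A : Set ℕ) : ℕ →. ℕ := fun n => Part.some (if n ∈ A then 1 else 0)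

/-- Turing reducibility `A ≤_T B` on subsets of ℕ. -/
def TuringLE (A B : Set ℕ) : Prop := OracleRecursiveIn (chi B) (chi A)

theorem partrec_recursiveIn {f : ℕ →. ℕ} (h : Nat.Partrec f) (O : ℕ →. ℕ) :
    OracleRecursiveIn O f := by
  induction h with
  | zero => exact .zero
  | succ => exact .succ
  | left => exact .left
  | right => exact .right
  | pair _ _ ih1 ih2 => exact .pair ih1 ih2
  | comp _ _ ih1 ih2 => exact .comp ih1 ih2
  | prec _ _ ih1 ih2 => exact .prec ih1 ih2
  | rfind _ ih => exact .rfind ih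

theorem TuringLE.of_fun {f : ℕ → ℕ} (hf : Nat.Partrec ↑f) {A C : Set ℕ}
    (h : ∀ m, m ∈ A ↔ f m ∈ C) : TuringLE A C := by
  have h2 : OracleRecursiveIn (chi C) fun n => (↑f : ℕ →. ℕ) n >>= chi C :=
    OracleRecursiveIn.comp .oracle (partrec_recursiveIn hf (chi C))
  have : chi A = fun n => (↑f : ℕ →. ℕ) n >>= chi C := by
    funext m
    classical
    simp only [chi, PFun.coe_val, Part.bind_eq_bind, Part.bind_some]
    show _ = (Part.some (f m)).bind (chi C)
    refine Eq.trans ?_ (Part.bind_some (f m) (chi C)).symm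
    show _ = Part.some (if f m ∈ C then 1 else 0)
    refine congrArg Part.some ?_
    by_cases hm : m ∈ A
    · rw [if_pos hm, if_pos ((h m).mp hm)]
    · rw [if_neg hm, if_neg (fun hc => hm ((h m).mpr hc))]
  rw [TuringLE, this]
  exact h2

theorem partrec_pair_left (n : ℕ) : Nat.Partrec ↑(fun m => 2 * Nat.pair n m) := by
  apply Nat.Partrec.of_primrec
  apply Primrec.nat_iff.mp
  exact Primrec.nat_double.comp (Primrec₂.natPair.comp (Primrec.const n) Primrec.id)

theorem partrec_odd : Nat.Partrec ↑(fun m : ℕ => 2 * m + 1) := by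
  apply Nat.Partrec.of_primrec
  exact Primrec.nat_iff.mp Primrec.nat_double_succ

inductive CodeO
  | zero | succ | left | right | oracle
  | pair (a b : CodeO) | comp (a b : CodeO) | prec (a b : CodeO) | rfind (a : CodeO)

namespace CodeO

def enc : CodeO → ℕ
  | zero => 0 | succ => 1 | left => 2 | right => 3 | oracle => 4
  | pair a b => 5 + 4 * Nat.pair (enc a) (enc b)
  | comp a b => 6 + 4 * Nat.pair (enc a) (enc b)
  | prec a b => 7 + 4 * Nat.pair (enc a) (enc b)
  | rfind a => 8 + 4 * Nat.pair (enc a) (enc a)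

theorem enc_inj : Function.Injective enc := by
  intro a
  induction a with
  | pair a b iha ihb =>
      intro c h; cases c <;> simp only [enc] at h <;> try omega
      case pair a' b' =>
        have := Nat.pair_eq_pair.mp (by omega : Nat.pair (enc a) (enc b) = Nat.pair (enc a') (enc b'))
        rw [iha this.1, ihb this.2]
  | comp a b iha ihb =>
      intro c h; cases c <;> simp only [enc] at h <;> try omega
      case comp a' b' =>
        have := Nat.pair_eq_pair.mp (by omega : Nat.pair (enc a) (enc b) = Nat.pair (enc a') (enc b'))
        rw [iha this.1, ihb this.2]
  | prec a b iha ihb =>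
      intro c h; cases c <;> simp only [enc] at h <;> try omega
      case prec a' b' =>
        have := Nat.pair_eq_pair.mp (by omega : Nat.pair (enc a) (enc b) = Nat.pair (enc a') (enc b'))
        rw [iha this.1, ihb this.2]
  | rfind a iha =>
      intro c h; cases c <;> simp only [enc] at h <;> try omega
      case rfind a' =>
        have := Nat.pair_eq_pair.mp (by omega : Nat.pair (enc a) (enc a) = Nat.pair (enc a') (enc a'))
        rw [iha this.1]
  | zero => intro c h; cases c <;> simp only [enc] at h <;> first | rfl | omega
  | succ => intro c h; cases c <;> simp only [enc] at h <;> first | rfl | omega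
  | left => intro c h; cases c <;> simp only [enc] at h <;> first | rfl | omega
  | right => intro c h; cases c <;> simp only [enc] at h <;> first | rfl | omega
  | oracle => intro c h; cases c <;> simp only [enc] at h <;> first | rfl | omega

instance : Countable CodeO := enc_inj.countable

noncomputable def evalO (O : ℕ →. ℕ) : CodeO → ℕ →. ℕ
  | zero => pure 0
  | succ => Nat.succ
  | left => ↑fun n : ℕ => n.unpair.1
  | right => ↑fun n : ℕ => n.unpair.2
  | oracle => O
  | pair a b => fun n => Nat.pair <$> evalO O a n <*> evalO O b n
  | comp a b => fun n => evalO O b n >>= evalO O a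
  | prec a b => Nat.unpaired fun x n =>
      n.rec (evalO O a x) fun y IH => do let i ← IH; evalO O b (Nat.pair x (Nat.pair y i))
  | rfind a => fun x => Nat.rfind fun n => (fun m => m = 0) <$> evalO O a (Nat.pair x n)

theorem exists_code {O f : ℕ →. ℕ} (h : OracleRecursiveIn O f) : ∃ c : CodeO, evalO O c = f := by
  induction h with
  | zero => exact ⟨.zero, rfl⟩
  | succ => exact ⟨.succ, rfl⟩
  | left => exact ⟨.left, rfl⟩
  | right => exact ⟨.right, rfl⟩
  | oracle => exact ⟨.oracle, rfl⟩
  | pair _ _ ih1 ih2 =>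
      obtain ⟨c1, rfl⟩ := ih1; obtain ⟨c2, rfl⟩ := ih2; exact ⟨.pair c1 c2, rfl⟩
  | comp _ _ ih1 ih2 =>
      obtain ⟨c1, rfl⟩ := ih1; obtain ⟨c2, rfl⟩ := ih2; exact ⟨.comp c1 c2, rfl⟩
  | prec _ _ ih1 ih2 =>
      obtain ⟨c1, rfl⟩ := ih1; obtain ⟨c2, rfl⟩ := ih2; exact ⟨.prec c1 c2, rfl⟩
  | rfind _ ih =>
      obtain ⟨c, rfl⟩ := ih; exact ⟨.rfind c, rfl⟩

end CodeO

theorem chi_injective : Function.Injective chi := by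
  intro A B h
  ext n
  have := congrFun h n
  simp only [chi] at this
  by_cases hA : n ∈ A <;> by_cases hB : n ∈ B <;>
    simp [hA, hB, Part.some_inj] at this ⊢ <;> tauto

theorem countable_pred (A : Set ℕ) : {B : Set ℕ | TuringLE B A}.Countable := by
  rw [← Set.countable_coe_iff]
  have key : ∀ B : {B : Set ℕ | TuringLE B A}, ∃ c : CodeO, CodeO.evalO (chi A) c = chi B.1 :=
    fun B => CodeO.exists_code B.2
  choose F hF using key
  have : Function.Injective F := by
    intro B B' h
    have : chi B.1 = chi B'.1 := by rw [← hF B, ← hF B', h]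
    exact Subtype.ext (chi_injective this)
  exact this.countable

universe u

abbrev IndexT : Type (u + 1) := {o : Ordinal.{u} // o < (Cardinal.aleph 1).ord}

theorem countable_lt (ξ : IndexT.{u}) : Countable {α : IndexT.{u} // α < ξ} := by
  have h1 : Countable (Set.Iio ξ.1) := by
    rw [← Cardinal.mk_le_aleph0_iff, Ordinal.mk_Iio_ordinal]
    have h2 : ξ.1.card < Cardinal.aleph 1 := Cardinal.lt_ord.mp ξ.2
    have h3 : ξ.1.card ≤ Cardinal.aleph 0 := by
      rw [← Order.lt_succ_iff, ← Cardinal.aleph_succ]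
      rw [(by norm_num : (Order.succ (0:Ordinal)) = 1)]
      exact h2
    rw [Cardinal.aleph_zero] at h3
    calc Cardinal.lift.{u+1} ξ.1.card ≤ Cardinal.lift.{u+1} Cardinal.aleph0 :=
          Cardinal.lift_le.mpr h3
      _ = Cardinal.aleph0 := Cardinal.lift_aleph0
  have : Function.Injective (fun α : {α : IndexT.{u} // α < ξ} =>
      (⟨α.1.1, α.2⟩ : Set.Iio ξ.1)) := by
    intro a b h
    simp only [Subtype.mk.injEq] at h
    have h' := congrArg Subtype.val h
    exact Subtype.ext (Subtype.ext h')
  exact this.countable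

theorem exists_enum (ξ : IndexT.{u}) :
    ∃ e : ℕ → IndexT.{u}, ∀ α : IndexT.{u}, α < ξ → ∃ n, e n = α := by
  have := countable_lt ξ
  by_cases hne : Nonempty {α : IndexT.{u} // α < ξ}
  · obtain ⟨f, hf⟩ := exists_surjective_nat {α : IndexT.{u} // α < ξ}
    refine ⟨fun n => (f n).1, fun α hα => ?_⟩
    obtain ⟨n, hn⟩ := hf ⟨α, hα⟩
    exact ⟨n, congrArg Subtype.val hn⟩
  · exact ⟨fun _ => ξ, fun α hα => absurd ⟨⟨α, hα⟩⟩ hne⟩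

noncomputable def enumLt (ξ : IndexT.{u}) : ℕ → IndexT.{u} := (exists_enum ξ).choose

theorem enumLt_spec (ξ : IndexT.{u}) {α : IndexT.{u}} (h : α < ξ) : ∃ n, enumLt ξ n = α :=
  (exists_enum ξ).choose_spec α h

noncomputable def chain (Bf : IndexT.{u} → Set ℕ) (ξ : IndexT.{u}) : Set ℕ :=
  {n : ℕ | (∃ k, n = 2 * k + 1 ∧ k ∈ Bf ξ) ∨
    (∃ k, n = 2 * k ∧
      if h : enumLt ξ k.unpair.1 < ξ then k.unpair.2 ∈ chain Bf (enumLt ξ k.unpair.1)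
      else False)}
termination_by ξ.1
decreasing_by exact h

theorem mem_chain_iff (Bf : IndexT.{u} → Set ℕ) (ξ : IndexT.{u}) (n : ℕ) :
    n ∈ chain Bf ξ ↔ (∃ k, n = 2 * k + 1 ∧ k ∈ Bf ξ) ∨
      (∃ k, n = 2 * k ∧
        if enumLt ξ k.unpair.1 < ξ then k.unpair.2 ∈ chain Bf (enumLt ξ k.unpair.1)
        else False) := by
  conv_lhs => rw [chain]
  simp only [Set.mem_setOf_eq, dite_eq_ite]

theorem odd_mem_chain (Bf : IndexT.{u} → Set ℕ) (ξ : IndexT.{u}) (k : ℕ) :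
    2 * k + 1 ∈ chain Bf ξ ↔ k ∈ Bf ξ := by
  rw [mem_chain_iff]
  constructor
  · rintro (⟨k', hk', h⟩ | ⟨k', hk', _⟩)
    · obtain rfl : k = k' := by omega
      exact h
    · omega
  · intro h; exact Or.inl ⟨k, rfl, h⟩

theorem even_mem_chain (Bf : IndexT.{u} → Set ℕ) (ξ : IndexT.{u}) (k : ℕ) :
    2 * k ∈ chain Bf ξ ↔
      (if enumLt ξ k.unpair.1 < ξ then k.unpair.2 ∈ chain Bf (enumLt ξ k.unpair.1)
        else False) := by
  rw [mem_chain_iff]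
  constructor
  · rintro (⟨k', hk', _⟩ | ⟨k', hk', h⟩)
    · omega
    · obtain rfl : k = k' := by omega
      exact h
  · intro h; exact Or.inr ⟨k, rfl, h⟩

theorem chain_mono (Bf : IndexT.{u} → Set ℕ) {α ξ : IndexT.{u}} (h : α < ξ) :
    TuringLE (chain Bf α) (chain Bf ξ) := by
  obtain ⟨n, hn⟩ := enumLt_spec ξ h
  apply TuringLE.of_fun (partrec_pair_left n)
  intro m
  rw [even_mem_chain]
  simp only [Nat.unpair_pair, hn, if_pos h]

theorem le_chain (Bf : IndexT.{u} → Set ℕ) (ξ : IndexT.{u}) :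
    TuringLE (Bf ξ) (chain Bf ξ) := by
  apply TuringLE.of_fun partrec_odd
  intro m
  rw [odd_mem_chain]

theorem mk_IndexT : Cardinal.mk IndexT.{u} = Cardinal.aleph 1 := by
  have h := Ordinal.mk_Iio_ordinal ((Cardinal.aleph 1).ord : Ordinal.{u})
  rw [Cardinal.card_ord, Cardinal.lift_aleph, Ordinal.lift_one] at h
  exact h

instance : Nonempty IndexT.{u} :=
  ⟨⟨0, Cardinal.lt_ord.mpr (by simpa using Cardinal.aleph_pos 1)⟩⟩

theorem CH_iff_cofinal_chain :
    Cardinal.mk (Set ℕ) = Cardinal.aleph 1 ↔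
      ∃ A : {o : Ordinal // o < (Cardinal.aleph 1).ord} → Set ℕ,
        (∀ α ξ : {o : Ordinal // o < (Cardinal.aleph 1).ord},
            α < ξ → TuringLE (A α) (A ξ)) ∧
          ∀ B : Set ℕ, ∃ ξ, TuringLE B (A ξ) := by
  constructor
  · intro hCH
    have hEq : Cardinal.lift.{0} (Cardinal.mk IndexT.{u_1}) =
        Cardinal.lift.{u_1+1} (Cardinal.mk (Set ℕ)) := by
      rw [mk_IndexT, hCH, Cardinal.lift_id', Cardinal.lift_aleph, Ordinal.lift_one]
    obtain ⟨e⟩ := Cardinal.lift_mk_eq'.mp hEq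
    refine ⟨chain e, fun α ξ h => chain_mono e h, fun B => ?_⟩
    refine ⟨e.symm B, ?_⟩
    have := le_chain e (e.symm B)
    rwa [Equiv.apply_symm_apply] at this
  · rintro ⟨A, _, hcof⟩
    refine le_antisymm ?_ ?_
    · have hunion : (Set.univ : Set (Set ℕ)) = ⋃ ξ : IndexT.{u_1}, {B | TuringLE B (A ξ)} := by
        ext B
        simp only [Set.mem_univ, Set.mem_iUnion, Set.mem_setOf_eq, true_iff]
        exact hcof B
      have h1 : Cardinal.lift.{u_1+1} (Cardinal.mk (Set ℕ)) ≤
          Cardinal.lift.{u_1+1} (Cardinal.aleph (1 : Ordinal.{0})) := by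
        calc Cardinal.lift.{u_1+1} (Cardinal.mk (Set ℕ))
            = Cardinal.lift.{u_1+1} (Cardinal.mk (Set.univ : Set (Set ℕ))) := by
              rw [Cardinal.mk_univ]
          _ = Cardinal.lift.{u_1+1} (Cardinal.mk (⋃ ξ : IndexT.{u_1}, {B | TuringLE B (A ξ)})) := by
              rw [← hunion]
          _ ≤ Cardinal.mk IndexT.{u_1} *
              ⨆ ξ : IndexT.{u_1}, Cardinal.lift.{u_1+1} (Cardinal.mk {B | TuringLE B (A ξ)}) := by
              simpa using Cardinal.mk_iUnion_le_lift (fun ξ : IndexT.{u_1} => {B | TuringLE B (A ξ)})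
          _ ≤ Cardinal.aleph (1 : Ordinal.{u_1+1}) * Cardinal.aleph (1 : Ordinal.{u_1+1}) := by
              refine mul_le_mul' (le_of_eq mk_IndexT) (ciSup_le' fun ξ => ?_)
              have hc : Cardinal.mk {B : Set ℕ | TuringLE B (A ξ)} ≤ Cardinal.aleph0 :=
                Cardinal.le_aleph0_iff_set_countable.mpr (countable_pred (A ξ))
              calc Cardinal.lift.{u_1+1} (Cardinal.mk {B : Set ℕ | TuringLE B (A ξ)})
                  ≤ Cardinal.lift.{u_1+1} Cardinal.aleph0 := Cardinal.lift_le.mpr hc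
                _ = Cardinal.aleph0 := Cardinal.lift_aleph0
                _ ≤ Cardinal.aleph (1 : Ordinal.{u_1+1}) := Cardinal.aleph0_le_aleph 1
          _ = Cardinal.lift.{u_1+1} (Cardinal.aleph (1 : Ordinal.{0})) := by
              rw [Cardinal.mul_eq_self (Cardinal.aleph0_le_aleph (1 : Ordinal.{u_1+1})),
                Cardinal.lift_aleph, Ordinal.lift_one]
      exact Cardinal.lift_le.mp h1
    · rw [Cardinal.mk_set, Cardinal.mk_nat, Cardinal.two_power_aleph0]
      exact Cardinal.aleph_one_le_continuum
end
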